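/- arXiv:2008.04836 — 8 statements merged into one kernel-verified Lean document; each statement's English description precedes it below -/
import Mathlib

section
/- Let G be a finitely generated free abelian group (written multiplicatively) and let g, h ∈ G be elements such that the subgroup generated by g and h has rank 2. Then the elements (1 − g) and (1 − h) are relatively prime in the group ring ℤ[G]. -/
/-!
Since `g` and `h` are independent, some `2 × 2` minor of their coordinates is nonzero, which gives
a homomorphism `φ : G → ℤ` with `φ g = 0` and `φ h ≠ 0`. Use it to grade `ℤ[G]`, i.e. embed
`ℤ[G]` into `ℤ[G][t, t⁻¹]` by `x ↦ t ^ φ x • x`, a map with left inverse `t ↦ 1`.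
As `ℤ[G]` is a domain, a divisor of the homogeneous element `1 - g` is homogeneous, so a common
divisor `d` is sent to `t ^ c • d`. This also divides `1 - t ^ φ h • h`, whose coefficient in
degree `0` is `1`, forcing `d` to be a unit.
-/

open MonoidAlgebra

theorem Module.Basis.exists_repr_mul_ne_repr_mul {ι R M : Type*} [CommRing R] [Nontrivial R]
    [AddCommGroup M] [Module R M] (b : Module.Basis ι R M) {u v : M}
    (huv : LinearIndependent R ![u, v]) :
    ∃ i j, b.repr u i * b.repr v j ≠ b.repr u j * b.repr v i := by
  by_contra! hminors
  obtain ⟨i, hi⟩ := Finsupp.ne_iff.1 (b.repr.map_ne_zero_iff.2 (huv.ne_zero 0))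
  have hrel : b.repr v i • u + (-b.repr u i) • v = 0 := by
    refine b.repr.injective (Finsupp.ext fun j => ?_)
    simp only [map_add, map_smul, Finsupp.add_apply, Finsupp.smul_apply, smul_eq_mul, map_zero,
      Finsupp.coe_zero, Pi.zero_apply]
    linear_combination (hminors i j).symm
  exact hi (neg_eq_zero.1 (LinearIndependent.pair_iff.1 huv _ _ hrel).2)

theorem Module.exists_dual_apply_eq_zero_apply_ne_zero {R M : Type*} [CommRing R] [Nontrivial R]
    [AddCommGroup M] [Module R M] [Module.Free R M] {u v : M}
    (huv : LinearIndependent R ![u, v]) : ∃ f : Module.Dual R M, f u = 0 ∧ f v ≠ 0 := by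
  let b := Module.Free.chooseBasis R M
  obtain ⟨i, j, hij⟩ := b.exists_repr_mul_ne_repr_mul huv
  refine ⟨b.repr u j • b.coord i - b.repr u i • b.coord j, ?_, ?_⟩
  all_goals simp only [LinearMap.sub_apply, LinearMap.smul_apply, Module.Basis.coord_apply,
    smul_eq_mul]
  · ring
  · exact sub_ne_zero.2 fun h => hij (by linear_combination -h)

theorem exists_monoidHom_eq_one_ne_one {G : Type*} [CommGroup G] [Module.Free ℤ (Additive G)]
    {g h : G} (hgh : ∀ a b : ℤ, g ^ a * h ^ b = 1 → a = 0 ∧ b = 0) :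
    ∃ φ : G →* Multiplicative ℤ, φ g = 1 ∧ φ h ≠ 1 := by
  obtain ⟨f, hfg, hfh⟩ := Module.exists_dual_apply_eq_zero_apply_ne_zero
    (LinearIndependent.pair_iff.2 fun a b hab => hgh a b hab :
      LinearIndependent ℤ ![Additive.ofMul g, Additive.ofMul h])
  exact ⟨AddMonoidHom.toMultiplicativeRight f.toAddMonoidHom, congrArg Multiplicative.ofAdd hfg,
    fun h1 => hfh (congrArg Multiplicative.toAdd h1)⟩

theorem UniqueSums.of_free (R M : Type*) [Semiring R] [UniqueSums R] [AddCommMonoid M]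
    [Module R M] [Module.Free R M] : UniqueSums M :=
  let b := Module.Free.chooseBasis R M
  .of_injective_addHom b.repr.toAddMonoidHom.toAddHom b.repr.injective inferInstance

section LinearOrder

variable {Γ : Type*} [CommMonoid Γ] [LinearOrder Γ] [IsOrderedCancelMonoid Γ]

theorem Finset.uniqueMul_max' {A B : Finset Γ} (hA : A.Nonempty) (hB : B.Nonempty) :
    UniqueMul A B (A.max' hA) (B.max' hB) := by
  intro a b ha hb hab
  have ha' : a ≤ A.max' hA := A.le_max' a ha
  have hb' : b ≤ B.max' hB := B.le_max' b hb
  by_contra hne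
  refine hab.not_lt ?_
  rcases ha'.lt_or_eq with ha' | rfl
  · exact mul_lt_mul_of_lt_of_le ha' hb'
  · exact mul_lt_mul_of_le_of_lt le_rfl (hb'.lt_of_ne fun h => hne ⟨rfl, h⟩)

theorem Finset.uniqueMul_min' {A B : Finset Γ} (hA : A.Nonempty) (hB : B.Nonempty) :
    UniqueMul A B (A.min' hA) (B.min' hB) := by
  intro a b ha hb hab
  have ha' : A.min' hA ≤ a := A.min'_le a ha
  have hb' : B.min' hB ≤ b := B.min'_le b hb
  by_contra hne
  refine hab.not_gt ?_
  rcases ha'.lt_or_eq with ha' | rfl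
  · exact mul_lt_mul_of_lt_of_le ha' hb'
  · exact mul_lt_mul_of_le_of_lt le_rfl (hb'.lt_of_ne fun h => hne ⟨rfl, h.symm⟩)

end LinearOrder

namespace MonoidAlgebra

theorem mul_eq_of_mul_eq_single {R Γ : Type*} [Semiring R] [NoZeroDivisors R] [Mul Γ]
    {P Q : MonoidAlgebra R Γ} {n a b : Γ} {r : R} (hPQ : P * Q = single n r)
    (ha : a ∈ P.coeff.support) (hb : b ∈ Q.coeff.support)
    (hab : UniqueMul P.coeff.support Q.coeff.support a b) : a * b = n := by
  classical
  have hcoeff := coeff_mul_mul_of_uniqueMul hab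
  rw [hPQ, coeff_single, Finsupp.single_apply] at hcoeff
  by_contra hne
  rw [if_neg (Ne.symm hne)] at hcoeff
  exact mul_ne_zero (Finsupp.mem_support_iff.1 ha) (Finsupp.mem_support_iff.1 hb) hcoeff.symm

/-- Over a linearly ordered monoid, both the largest and the smallest exponents of `P` and `Q`
multiply to `n`; hence the support of `P` is a single point. -/
theorem exists_eq_single_of_mul_eq_single {R Γ : Type*} [Semiring R] [NoZeroDivisors R]
    [CommMonoid Γ] [LinearOrder Γ] [IsOrderedCancelMonoid Γ] {P Q : MonoidAlgebra R Γ} {n : Γ}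
    {r : R} (hr : r ≠ 0) (hPQ : P * Q = single n r) : ∃ a p, P = single a p := by
  set A := P.coeff.support
  set B := Q.coeff.support
  have hA : A.Nonempty := by
    rw [Finsupp.support_nonempty_iff, Ne, coeff_eq_zero]
    rintro rfl
    exact hr (single_eq_zero.1 (hPQ.symm.trans (zero_mul Q)))
  have hB : B.Nonempty := by
    rw [Finsupp.support_nonempty_iff, Ne, coeff_eq_zero]
    rintro rfl
    exact hr (single_eq_zero.1 (hPQ.symm.trans (mul_zero P)))
  have hmax := mul_eq_of_mul_eq_single hPQ (A.max'_mem hA) (B.max'_mem hB)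
    (Finset.uniqueMul_max' hA hB)
  have hmin := mul_eq_of_mul_eq_single hPQ (A.min'_mem hA) (B.min'_mem hB)
    (Finset.uniqueMul_min' hA hB)
  have hmax_le_min : A.max' hA ≤ A.min' hA :=
    le_of_mul_le_mul_right' <|
      calc A.max' hA * B.min' hB ≤ A.max' hA * B.max' hB :=
            mul_le_mul_right (B.min'_le_max' hB) _
        _ = A.min' hA * B.min' hB := hmax.trans hmin.symm
  refine ⟨A.max' hA, _, coeff_injective (Finsupp.support_subset_singleton.1 fun a ha => ?_)⟩
  exact Finset.mem_singleton.2 ((A.le_max' a ha).antisymm (hmax_le_min.trans (A.min'_le a ha)))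

theorem isUnit_of_single_mul_eq_one_sub_single {R Γ : Type*} [CommRing R] [Group Γ]
    {c γ : Γ} {d x : R} {Q : MonoidAlgebra R Γ} (hγ : γ ≠ 1)
    (h : single c d * Q = 1 - single γ x) : IsUnit d := by
  classical
  have hcoeff := congrArg (fun P : MonoidAlgebra R Γ => P.coeff 1) h
  simp only [coeff_single_mul_apply, coeff_sub, one_def, coeff_single, Finsupp.sub_apply,
    Finsupp.single_apply, if_neg hγ, sub_zero] at hcoeff
  exact IsUnit.of_mul_eq_one _ hcoeff

section Grading

variable {k G Γ : Type*} [CommSemiring k] [CommMonoid G] [CommMonoid Γ]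

/-- The grading of `k[G]` by `φ`: `x ∈ G` is sent to the monomial `x` placed in degree `φ x`. -/
noncomputable def gradingMap (φ : G →* Γ) :
    MonoidAlgebra k G →ₐ[k] MonoidAlgebra (MonoidAlgebra k G) Γ :=
  lift k _ G ((of (MonoidAlgebra k G) Γ).comp φ *
    (algebraMap (MonoidAlgebra k G) (MonoidAlgebra (MonoidAlgebra k G) Γ) :
      MonoidAlgebra k G →* _).comp (of k G))

theorem gradingMap_of (φ : G →* Γ) (x : G) :
    gradingMap φ (of k G x) = single (φ x) (of k G x) := by
  simp [gradingMap, of_apply, single_mul_single]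

theorem lift_one_gradingMap (φ : G →* Γ) (x : MonoidAlgebra k G) :
    lift (MonoidAlgebra k G) (MonoidAlgebra k G) Γ 1 (gradingMap φ x) = x := by
  have : ((lift (MonoidAlgebra k G) (MonoidAlgebra k G) Γ 1).restrictScalars k).comp
      (gradingMap φ) = AlgHom.id k _ := by
    refine algHom_ext (fun y => ?_) (Subsingleton.elim _ _)
    simpa using congrArg (lift (MonoidAlgebra k G) (MonoidAlgebra k G) Γ 1)
      (gradingMap_of (k := k) φ y)
  exact AlgHom.congr_fun this x

theorem gradingMap_eq_single_of_mul_eq_single [NoZeroDivisors (MonoidAlgebra k G)]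
    [LinearOrder Γ] [IsOrderedCancelMonoid Γ] (φ : G →* Γ) {d : MonoidAlgebra k G}
    {Q : MonoidAlgebra (MonoidAlgebra k G) Γ} {n : Γ} {r : MonoidAlgebra k G} (hr : r ≠ 0)
    (h : gradingMap φ d * Q = single n r) : ∃ c, gradingMap φ d = single c d := by
  obtain ⟨c, p, hcp⟩ := exists_eq_single_of_mul_eq_single hr h
  have hpd := lift_one_gradingMap φ d
  rw [hcp, lift_single] at hpd
  exact ⟨c, by simpa [← hpd] using hcp⟩

end Grading

end MonoidAlgebra

theorem veering_relprime_one_sub_general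
    (G : Type) [CommGroup G]
    [Module.Free ℤ (Additive G)]
    (g h : G) (hrank : ∀ a b : ℤ, g ^ a * h ^ b = 1 → a = 0 ∧ b = 0) :
    IsRelPrime ((1 : MonoidAlgebra ℤ G) - MonoidAlgebra.of ℤ G g)
      ((1 : MonoidAlgebra ℤ G) - MonoidAlgebra.of ℤ G h) := by
  obtain ⟨φ, hφg, hφh⟩ := exists_monoidHom_eq_one_ne_one hrank
  have : UniqueProds G := by
    have := UniqueSums.of_free ℤ (Additive G)
    exact inferInstanceAs (UniqueProds (Multiplicative (Additive G)))
  have hg : (1 : MonoidAlgebra ℤ G) - of ℤ G g ≠ 0 := by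
    refine sub_ne_zero.2 fun h1 => one_ne_zero (hrank 1 0 ?_).1
    simp [of_injective (h1.symm.trans (map_one _).symm)]
  rintro d ⟨q, hq⟩ ⟨q', hq'⟩
  obtain ⟨c, hc⟩ := gradingMap_eq_single_of_mul_eq_single φ hg (Q := gradingMap φ q) <| by
    rw [← map_mul, ← hq, map_sub, map_one, gradingMap_of, hφg, one_def, single_sub]
  have hh : single c d * gradingMap φ q' = 1 - single (φ h) (of ℤ G h) := by
    rw [← hc, ← map_mul, ← hq', map_sub, map_one, gradingMap_of]
  exact isUnit_of_single_mul_eq_one_sub_single hφh hh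

/-- Let `G` be a finitely generated free abelian group (written
multiplicatively) and `g h : G` generate a rank-2 subgroup (i.e. they are
multiplicatively independent).  Then `1 - g` and `1 - h` are relatively prime in
the integral group ring `ℤ[G]`. -/
theorem veering_relprime_one_sub
    (G : Type) [CommGroup G]
    [Module.Free ℤ (Additive G)] [Module.Finite ℤ (Additive G)]
    (g h : G) (hrank : ∀ a b : ℤ, g ^ a * h ^ b = 1 → a = 0 ∧ b = 0) :
    IsRelPrime ((1 : MonoidAlgebra ℤ G) - MonoidAlgebra.of ℤ G g)
      ((1 : MonoidAlgebra ℤ G) - MonoidAlgebra.of ℤ G h) :=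
  veering_relprime_one_sub_general G g h hrank
end

section
/- Let G be a finitely generated free abelian group and let g, h ∈ G be such that the subgroup ⟨g, h⟩ has rank 2. Then (1 + g) and (1 + h), as well as (1 + g) and (1 − h), are relatively prime in ℤ[G]. -/
/-!
For an additive map `F : G → ℚ`, the top `F`-slice of a product in the domain `ℤ[G]` is the
product of the top slices of the factors, and likewise for the bottom slices. Hence if `F` is
constant on the support of `v`, it is constant on the support of every divisor `d` of `v`.
Let `d` divide `1 + g` and `1 ± h`. Then every `F` vanishing at `g`, and every `F` vanishing at
`h`, is constant on the support of `d`. By duality over `ℚ`, the quotient `a / b` of two points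
of that support has a nontrivial power in `⟨g⟩` and one in `⟨h⟩`; since `g, h` are independent
and `G` is torsion-free, `a = b`. So `d` is a monomial, and comparing constant coefficients shows
that it is a unit.
-/

open scoped Finset

theorem exists_zsmul_eq_zsmul_of_forall_addMonoidHom {M : Type*} [AddCommGroup M]
    [Module.Free ℤ M] {x w : M} (h : ∀ f : M →+ ℚ, f w = 0 → f x = 0) :
    ∃ m n : ℤ, m ≠ 0 ∧ m • x = n • w := by
  let J : M →ₗ[ℤ] Module.Free.ChooseBasisIndex ℤ M →₀ ℚ :=
    Finsupp.mapRange.linearMap (Algebra.linearMap ℤ ℚ) ∘ₗ (Module.Free.chooseBasis ℤ M).repr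
  have hJ : Function.Injective J :=
    (Finsupp.mapRange_injective _ Int.cast_zero Int.cast_injective).comp
      (Module.Free.chooseBasis ℤ M).repr.injective
  have hmem : J x ∈ Submodule.span ℚ {J w} := by
    by_contra hx
    obtain ⟨φ, hφx, hφw⟩ := Submodule.exists_dual_map_eq_bot_of_notMem hx inferInstance
    refine hφx (h (φ.toAddMonoidHom.comp J.toAddMonoidHom) ?_)
    simpa [Submodule.map_span] using hφw
  obtain ⟨q, hq⟩ := Submodule.mem_span_singleton.1 hmem
  refine ⟨q.den, q.num, by exact_mod_cast q.den_nz, hJ ?_⟩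
  rw [map_zsmul, map_zsmul, ← hq, ← Int.cast_smul_eq_zsmul ℚ, ← Int.cast_smul_eq_zsmul ℚ, smul_smul,
    Int.cast_natCast, Rat.den_mul_eq_num]

instance {G : Type*} [CommGroup G] [Module.Free ℤ (Additive G)] : UniqueProds G :=
  have : UniqueSums (Additive G) := .of_injective_addHom
    (Module.Free.chooseBasis ℤ (Additive G)).repr.toAddMonoidHom.toAddHom
    (Module.Free.chooseBasis ℤ (Additive G)).repr.injective inferInstance
  inferInstanceAs (UniqueProds (Multiplicative (Additive G)))

theorem eq_one_of_forall_addMonoidHom {G : Type*} [CommGroup G] [Module.Free ℤ (Additive G)]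
    {g h x : G} (hrank : ∀ a b : ℤ, g ^ a * h ^ b = 1 → a = 0 ∧ b = 0)
    (hg : ∀ f : Additive G →+ ℚ, f (.ofMul g) = 0 → f (.ofMul x) = 0)
    (hh : ∀ f : Additive G →+ ℚ, f (.ofMul h) = 0 → f (.ofMul x) = 0) : x = 1 := by
  obtain ⟨m, n, hm, hxg⟩ := exists_zsmul_eq_zsmul_of_forall_addMonoidHom hg
  obtain ⟨k, l, hk, hxh⟩ := exists_zsmul_eq_zsmul_of_forall_addMonoidHom hh
  simp only [← ofMul_zpow, EmbeddingLike.apply_eq_iff_eq] at hxg hxh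
  have hgh : g ^ (n * k) = h ^ (l * m) := calc
    g ^ (n * k) = (x ^ m) ^ k := by rw [zpow_mul, hxg]
    _ = (x ^ k) ^ m := by rw [← zpow_mul, ← zpow_mul, mul_comm]
    _ = h ^ (l * m) := by rw [hxh, zpow_mul]
  have hn : n = 0 :=
    (mul_eq_zero.1 (hrank _ (-(l * m)) (by rw [zpow_neg, hgh, mul_inv_cancel])).1).resolve_right hk
  rw [hn, zpow_zero] at hxg
  have hxm : m • Additive.ofMul x = 0 := by rw [← ofMul_zpow, hxg, ofMul_one]
  exact Additive.ofMul.injective ((smul_eq_zero.1 hxm).resolve_left hm)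

namespace MonoidAlgebra

section Slices

variable {R G : Type*} [Ring R] [Semigroup G]

theorem coeff_mul_eq_zero_of_forall_mul_ne {p q : R[G]} {x : G}
    (h : ∀ a ∈ p.coeff.support, ∀ c ∈ q.coeff.support, a * c ≠ x) : (p * q).coeff x = 0 := by
  classical
  refine Finsupp.notMem_support_iff.1 fun hx => ?_
  obtain ⟨a, ha, c, hc, rfl⟩ := Finset.mem_mul.1 (support_coeff_mul_subset p q hx)
  exact h a ha c hc rfl

variable {Γ : Type*} [AddCommMonoid Γ] [LinearOrder Γ] [IsOrderedCancelAddMonoid Γ] {F : G → Γ}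

theorem coeff_mul_eq_coeff_filter_mul_filter (hF : ∀ a b, F (a * b) = F a + F b) {d u : R[G]}
    {A C : Γ} (hd : ∀ a ∈ d.coeff.support, F a ≤ A) (hu : ∀ c ∈ u.coeff.support, F c ≤ C)
    {x : G} (hx : F x = A + C) :
    (d * u).coeff x =
      (ofCoeff (d.coeff.filter (F · = A)) * ofCoeff (u.coeff.filter (F · = C))).coeff x := by
  set p : R[G] := ofCoeff (d.coeff.filter (F · = A))
  set r : R[G] := ofCoeff (d.coeff.filter (¬F · = A))
  set q : R[G] := ofCoeff (u.coeff.filter (F · = C))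
  set s : R[G] := ofCoeff (u.coeff.filter (¬F · = C))
  have hd_split : d = p + r := coeff_injective (Finsupp.filter_add_filter_not d.coeff _).symm
  have hu_split : u = q + s := coeff_injective (Finsupp.filter_add_filter_not u.coeff _).symm
  have hps : (p * s).coeff x = 0 := by
    refine coeff_mul_eq_zero_of_forall_mul_ne fun a ha c hc hac => (?_ : F (a * c) < F x).ne
      (congrArg F hac)
    simp only [p, s, Finsupp.support_filter, Finset.mem_filter] at ha hc
    rw [hF, hx, ha.2]
    exact add_lt_add_of_le_of_lt le_rfl (lt_of_le_of_ne (hu c hc.1) hc.2)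
  have hru : (r * u).coeff x = 0 := by
    refine coeff_mul_eq_zero_of_forall_mul_ne fun a ha c hc hac => (?_ : F (a * c) < F x).ne
      (congrArg F hac)
    simp only [r, Finsupp.support_filter, Finset.mem_filter] at ha
    rw [hF, hx]
    exact add_lt_add_of_lt_of_le (lt_of_le_of_ne (hd a ha.1) ha.2) (hu c hc)
  have hsplit : d * u = p * q + p * s + r * u := by
    rw [← mul_add, ← hu_split, ← add_mul, ← hd_split]
  rw [hsplit, coeff_add, coeff_add, Finsupp.add_apply, Finsupp.add_apply, hps, hru, add_zero,
    add_zero]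

theorem exists_mem_support_mul_forall_add_le [NoZeroDivisors R[G]]
    (hF : ∀ a b, F (a * b) = F a + F b) {d u : R[G]} (hd : d ≠ 0) (hu : u ≠ 0) :
    ∃ x ∈ (d * u).coeff.support, ∀ a ∈ d.coeff.support, ∀ c ∈ u.coeff.support,
      F a + F c ≤ F x := by
  obtain ⟨a₀, ha₀, hd_max⟩ := d.coeff.support.exists_max_image F
    (Finsupp.support_nonempty_iff.2 (coeff_eq_zero.not.2 hd))
  obtain ⟨c₀, hc₀, hu_max⟩ := u.coeff.support.exists_max_image F
    (Finsupp.support_nonempty_iff.2 (coeff_eq_zero.not.2 hu))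
  set p : R[G] := ofCoeff (d.coeff.filter (F · = F a₀))
  set q : R[G] := ofCoeff (u.coeff.filter (F · = F c₀))
  have hp : p ≠ 0 := fun h => Finsupp.mem_support_iff.1 ha₀ <| by
    simpa [p] using congrArg (·.coeff a₀) h
  have hq : q ≠ 0 := fun h => Finsupp.mem_support_iff.1 hc₀ <| by
    simpa [q] using congrArg (·.coeff c₀) h
  obtain ⟨x, hx⟩ := Finsupp.support_nonempty_iff.2 (coeff_eq_zero.not.2 (mul_ne_zero hp hq))
  have hFx : F x = F a₀ + F c₀ := by
    classical
    obtain ⟨a, ha, c, hc, rfl⟩ := Finset.mem_mul.1 (support_coeff_mul_subset p q hx)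
    simp only [p, q, Finsupp.support_filter, Finset.mem_filter] at ha hc
    rw [hF, ha.2, hc.2]
  refine ⟨x, ?_, fun a ha c hc => hFx ▸ add_le_add (hd_max a ha) (hu_max c hc)⟩
  rw [Finsupp.mem_support_iff, coeff_mul_eq_coeff_filter_mul_filter hF hd_max hu_max hFx]
  exact Finsupp.mem_support_iff.1 hx

theorem eq_of_mem_support_of_dvd [NoZeroDivisors R[G]] (hF : ∀ a b, F (a * b) = F a + F b)
    {d v : R[G]} (hdv : d ∣ v) (hv : v ≠ 0)
    (hFv : ∀ x ∈ v.coeff.support, ∀ y ∈ v.coeff.support, F x = F y)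
    {a b : G} (ha : a ∈ d.coeff.support) (hb : b ∈ d.coeff.support) : F a = F b := by
  obtain ⟨u, rfl⟩ := hdv
  have hd : d ≠ 0 := left_ne_zero_of_mul hv
  have hu : u ≠ 0 := right_ne_zero_of_mul hv
  obtain ⟨x, hx, hx_max⟩ := exists_mem_support_mul_forall_add_le hF hd hu
  obtain ⟨y, hy, hy_min⟩ := exists_mem_support_mul_forall_add_le (F := OrderDual.toDual ∘ F)
    (fun a b => congrArg OrderDual.toDual (hF a b)) hd hu
  obtain ⟨c, hc⟩ := Finsupp.support_nonempty_iff.2 (coeff_eq_zero.not.2 hu)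
  have hle : ∀ a ∈ d.coeff.support, ∀ b ∈ d.coeff.support, F a ≤ F b := fun a ha b hb =>
    le_of_add_le_add_right <| calc
      F a + F c ≤ F x := hx_max a ha c hc
      _ = F y := hFv x hx y hy
      _ ≤ F b + F c := hy_min b hb c hc
  exact le_antisymm (hle a ha b hb) (hle b hb a ha)

end Slices

theorem isUnit_single {R G : Type*} [Semiring R] [Group G] (a : G) {r : R} (hr : IsUnit r) :
    IsUnit (single a r) := by
  obtain ⟨r, rfl⟩ := hr
  exact ⟨⟨single a r, single a⁻¹ ↑r⁻¹, by simp [one_def], by simp [one_def]⟩, rfl⟩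

theorem support_one_add_single_subset {R G : Type*} [Semiring R] [Monoid G] (w : G) (r : R) :
    (((1 : R[G]) + single w r).coeff.support : Set G) ⊆ {1, w} := by
  classical
  intro x hx
  rw [Finset.mem_coe, one_def, coeff_add, coeff_single, coeff_single] at hx
  rcases Finset.mem_union.1 (Finsupp.support_add hx) with hx | hx
  · exact Or.inl (Finset.mem_singleton.1 (Finsupp.support_single_subset hx))
  · exact Or.inr (Finset.mem_singleton.1 (Finsupp.support_single_subset hx))

theorem coeff_one_add_single_one {R G : Type*} [Semiring R] [Monoid G] {w : G} (hw : w ≠ 1)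
    (r : R) : ((1 : R[G]) + single w r).coeff 1 = 1 := by
  simp [one_def, hw.symm]

section CommGroup

variable {R G : Type*} [CommGroup G]

theorem addMonoidHom_ofMul_eq_of_dvd [Ring R] [NoZeroDivisors R[G]] {d v : R[G]} {w : G}
    (hdv : d ∣ v) (hv : v ≠ 0) (hsupp : (v.coeff.support : Set G) ⊆ {1, w}) {f : Additive G →+ ℚ}
    (hf : f (.ofMul w) = 0) {a b : G} (ha : a ∈ d.coeff.support) (hb : b ∈ d.coeff.support) :
    f (.ofMul a) = f (.ofMul b) := by
  have hfv : ∀ x ∈ v.coeff.support, f (.ofMul x) = 0 := fun x hx => by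
    rcases hsupp hx with rfl | rfl
    · simp
    · exact hf
  exact eq_of_mem_support_of_dvd (F := fun x => f (.ofMul x)) (fun _ _ => map_add f _ _) hdv hv
    (fun x hx y hy => (hfv x hx).trans (hfv y hy).symm) ha hb

theorem card_support_le_one_of_dvd [Ring R] [NoZeroDivisors R[G]] [Module.Free ℤ (Additive G)]
    {g h : G} (hrank : ∀ a b : ℤ, g ^ a * h ^ b = 1 → a = 0 ∧ b = 0) {d v₁ v₂ : R[G]}
    (hv₁ : v₁ ≠ 0) (hsupp₁ : (v₁.coeff.support : Set G) ⊆ {1, g}) (hd₁ : d ∣ v₁)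
    (hv₂ : v₂ ≠ 0) (hsupp₂ : (v₂.coeff.support : Set G) ⊆ {1, h}) (hd₂ : d ∣ v₂) :
    #d.coeff.support ≤ 1 := by
  refine Finset.card_le_one.2 fun a ha b hb => div_eq_one.1 <| eq_one_of_forall_addMonoidHom hrank
    (fun f hf => ?_) (fun f hf => ?_)
  · rw [ofMul_div, map_sub, addMonoidHom_ofMul_eq_of_dvd hd₁ hv₁ hsupp₁ hf ha hb, sub_self]
  · rw [ofMul_div, map_sub, addMonoidHom_ofMul_eq_of_dvd hd₂ hv₂ hsupp₂ hf ha hb, sub_self]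

theorem isRelPrime_of_support_subset [CommRing R] [IsDomain R] [Module.Free ℤ (Additive G)]
    {g h : G} (hrank : ∀ a b : ℤ, g ^ a * h ^ b = 1 → a = 0 ∧ b = 0) {v₁ v₂ : R[G]}
    (hsupp₁ : (v₁.coeff.support : Set G) ⊆ {1, g}) (h₁ : IsUnit (v₁.coeff 1))
    (hsupp₂ : (v₂.coeff.support : Set G) ⊆ {1, h}) (hv₂ : v₂ ≠ 0) : IsRelPrime v₁ v₂ := by
  intro d hd₁ hd₂
  have hv₁ : v₁ ≠ 0 := by rintro rfl; simp at h₁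
  obtain ⟨a, c, hd⟩ := Finsupp.card_support_le_one'.1
    (card_support_le_one_of_dvd hrank hv₁ hsupp₁ hd₁ hv₂ hsupp₂ hd₂)
  obtain rfl : d = single a c := coeff_injective hd
  obtain ⟨u, hu⟩ := hd₁
  have hc : c * u.coeff (a⁻¹ * 1) = v₁.coeff 1 := by rw [hu, coeff_single_mul_apply]
  exact isUnit_single a (isUnit_of_mul_isUnit_left (hc ▸ h₁))

theorem isRelPrime_one_add_single [CommRing R] [IsDomain R] [Module.Free ℤ (Additive G)]
    {g h : G} (hrank : ∀ a b : ℤ, g ^ a * h ^ b = 1 → a = 0 ∧ b = 0) (r s : R) :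
    IsRelPrime (1 + single g r) (1 + single h s) := by
  have hg : g ≠ 1 := fun hg => by simpa [hg] using hrank 1 0
  have hh : h ≠ 1 := fun hh => by simpa [hh] using hrank 0 1
  refine isRelPrime_of_support_subset hrank (support_one_add_single_subset g r)
    (by rw [coeff_one_add_single_one hg]; exact isUnit_one) (support_one_add_single_subset h s)
    fun h0 => ?_
  simpa [h0] using coeff_one_add_single_one hh s

end CommGroup

end MonoidAlgebra

theorem veering_relprime_one_add_general
    (G : Type) [CommGroup G]
    [Module.Free ℤ (Additive G)]
    (g h : G) (hrank : ∀ a b : ℤ, g ^ a * h ^ b = 1 → a = 0 ∧ b = 0) :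
    IsRelPrime ((1 : MonoidAlgebra ℤ G) + MonoidAlgebra.of ℤ G g)
      ((1 : MonoidAlgebra ℤ G) + MonoidAlgebra.of ℤ G h) ∧
    IsRelPrime ((1 : MonoidAlgebra ℤ G) + MonoidAlgebra.of ℤ G g)
      ((1 : MonoidAlgebra ℤ G) - MonoidAlgebra.of ℤ G h) := by
  simp only [MonoidAlgebra.of_apply, sub_eq_add_neg, ← MonoidAlgebra.single_neg]
  exact ⟨MonoidAlgebra.isRelPrime_one_add_single hrank 1 1,
    MonoidAlgebra.isRelPrime_one_add_single hrank 1 (-1)⟩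

/-- If `g, h` generate a rank-2 subgroup of a finitely generated
free abelian group `G`, then `1 + g` and `1 + h`, as well as `1 + g` and `1 - h`,
are relatively prime in `ℤ[G]`. -/
theorem veering_relprime_one_add
    (G : Type) [CommGroup G]
    [Module.Free ℤ (Additive G)] [Module.Finite ℤ (Additive G)]
    (g h : G) (hrank : ∀ a b : ℤ, g ^ a * h ^ b = 1 → a = 0 ∧ b = 0) :
    IsRelPrime ((1 : MonoidAlgebra ℤ G) + MonoidAlgebra.of ℤ G g)
      ((1 : MonoidAlgebra ℤ G) + MonoidAlgebra.of ℤ G h) ∧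
    IsRelPrime ((1 : MonoidAlgebra ℤ G) + MonoidAlgebra.of ℤ G g)
      ((1 : MonoidAlgebra ℤ G) - MonoidAlgebra.of ℤ G h) :=
  veering_relprime_one_add_general G g h hrank
end

section
/- Let k₁, …, kₙ be positive integers with gcd(k₁, …, kₙ) = 1, and for each i choose a sign εᵢ ∈ {+1, −1}. Then any common divisor in ℤ[t, t⁻¹] of the elements (1 + εᵢ t^{kᵢ}), for i = 1, …, n, is a unit times a divisor of (1 − t) or of (1 + t); moreover (1 − t) and (1 + t) cannot both be common divisors. -/
/-!
Since `εᵢ² = 1`, each `1 + εᵢ tᵏⁱ` divides `1 - (t²)ᵏⁱ`. The exponents `m` with `p ∣ 1 - xᵐ` are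
the multiples of the order of `x` in `A ⧸ (p)`, so a common divisor `p` divides `1 - (t²)^gcd = 1 - t²
= (1 - t)(1 + t)`, a product of two primes; hence `p` divides one of them unless both divide `p`.
Evaluating at `t = 1` and `t = -1` shows that both primes can divide every `1 + εᵢ tᵏⁱ` only if
all `εᵢ = -1` and all `kᵢ` are even, which contradicts `gcd kᵢ = 1`.
-/

open LaurentPolynomial

theorem Prime.algebraMap_of_forall_not_dvd {R S : Type*} [CommRing R] [IsDomain R] [CommRing S]
    [Algebra R S] (M : Submonoid R) [IsLocalization M S] {p : R} (hp : Prime p)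
    (hM : ∀ m ∈ M, ¬ p ∣ m) : Prime (algebraMap R S p) := by
  have hne : algebraMap R S p ≠ 0 := by
    rw [Ne, IsLocalization.map_eq_zero_iff M]
    rintro ⟨m, hm⟩
    have hm0 : (m : R) = 0 := (mul_eq_zero.1 hm).resolve_right hp.ne_zero
    exact hM m m.2 (hm0 ▸ dvd_zero p)
  have hd : Disjoint (M : Set R) (Ideal.span {p} : Ideal R) :=
    Set.disjoint_left.2 fun m hm hpm => hM m hm (Ideal.mem_span_singleton.1 hpm)
  have := IsLocalization.isPrime_of_isPrime_disjoint M S _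
    ((Ideal.span_singleton_prime hp.ne_zero).2 hp) hd
  rwa [Ideal.map_span, Set.image_singleton, Ideal.span_singleton_prime hne] at this

theorem dvd_one_sub_pow_finset_gcd {A ι : Type*} [CommRing A] {p x : A} {s : Finset ι}
    {m : ι → ℕ} (h : ∀ i ∈ s, p ∣ 1 - x ^ m i) : p ∣ 1 - x ^ s.gcd m := by
  have key (j : ℕ) : p ∣ 1 - x ^ j ↔ orderOf (Ideal.Quotient.mk (Ideal.span {p}) x) ∣ j := by
    rw [orderOf_dvd_iff_pow_eq_one, ← Ideal.Quotient.eq_zero_iff_dvd, map_sub, map_one, map_pow,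
      sub_eq_zero, eq_comm]
  rw [key]
  exact Finset.dvd_gcd fun i hi => (key _).1 (h i hi)

theorem one_add_mul_dvd_one_sub_sq {A : Type*} [CommRing A] {ε : A} (hε : ε ^ 2 = 1) (y : A) :
    1 + ε * y ∣ 1 - y ^ 2 :=
  ⟨1 - ε * y, by linear_combination y ^ 2 * hε⟩

theorem dvd_of_dvd_prime_mul_of_not_dvd {α : Type*} [CommMonoidWithZero α] [IsCancelMulZero α]
    {p q r : α} (hq : Prime q) (h : p ∣ q * r) (hqp : ¬ q ∣ p) : p ∣ r := by
  obtain ⟨s, hs⟩ := h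
  rcases hq.dvd_or_dvd ⟨r, hs.symm⟩ with hqp' | ⟨s', rfl⟩
  · exact absurd hqp' hqp
  · exact ⟨s', mul_left_cancel₀ hq.ne_zero (hs.trans (mul_left_comm p q s'))⟩

theorem dvd_or_dvd_of_dvd_prime_mul_prime {α : Type*} [CommMonoidWithZero α] [IsCancelMulZero α]
    {p q r : α} (hq : Prime q) (hr : Prime r) (h : p ∣ q * r) (hqr : ¬ (q ∣ p ∧ r ∣ p)) :
    p ∣ q ∨ p ∣ r := by
  by_cases hqp : q ∣ p
  · exact .inl (dvd_of_dvd_prime_mul_of_not_dvd hr (mul_comm q r ▸ h) fun hrp => hqr ⟨hqp, hrp⟩)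
  · exact .inr (dvd_of_dvd_prime_mul_of_not_dvd hq h hqp)

namespace LaurentPolynomial

variable {R : Type*} [CommRing R]

theorem prime_T_one_sub_C [IsDomain R] {a : R} (ha : a ≠ 0) : Prime (T 1 - C a : R[T;T⁻¹]) := by
  have hX : ∀ m ∈ Submonoid.powers (Polynomial.X : Polynomial R),
      ¬ Polynomial.X - Polynomial.C a ∣ m := by
    rintro _ ⟨j, rfl⟩ hdvd
    have := Polynomial.eval_dvd (x := a) hdvd
    simp only [Polynomial.eval_sub, Polynomial.eval_X, Polynomial.eval_C, sub_self,
      Polynomial.eval_pow, zero_dvd_iff] at this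
    exact ha (pow_eq_zero_iff'.1 this).1
  simpa [algebraMap_eq_toLaurent] using
    (Polynomial.prime_X_sub_C a).algebraMap_of_forall_not_dvd (S := R[T;T⁻¹]) _ hX

theorem prime_one_sub_T [IsDomain R] : Prime (1 - T 1 : R[T;T⁻¹]) := by
  simpa only [neg_sub, map_one] using (prime_T_one_sub_C (one_ne_zero (α := R))).neg

theorem prime_one_add_T [IsDomain R] : Prime (1 + T 1 : R[T;T⁻¹]) := by
  simpa [add_comm] using prime_T_one_sub_C (neg_ne_zero.2 (one_ne_zero (α := R)))

theorem eq_neg_one_of_one_sub_T_dvd {ε : R} {m : ℤ} (h : (1 - T 1 : R[T;T⁻¹]) ∣ 1 + C ε * T m) :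
    ε = -1 := by
  have := map_dvd (eval₂ (RingHom.id R) 1) h
  simp only [map_sub, map_add, map_one, map_mul, eval₂_T, eval₂_C, one_zpow, Units.val_one,
    RingHom.id_apply, mul_one, sub_self, zero_dvd_iff] at this
  linear_combination this

theorem even_of_one_add_T_dvd {m : ℕ} (h : (1 + T 1 : ℤ[T;T⁻¹]) ∣ 1 - T m) : Even m := by
  have := map_dvd (eval₂ (RingHom.id ℤ) (-1)) h
  simp only [map_sub, map_add, map_one, eval₂_T, zpow_one, zpow_natCast, Units.val_neg,
    Units.val_one, Units.val_pow_eq_pow_val, add_neg_cancel, zero_dvd_iff, sub_eq_zero] at this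
  exact (neg_one_pow_eq_one_iff_even (by decide)).1 this.symm

theorem dvd_one_sub_T_mul_one_add_T {ι : Type*} {s : Finset ι} {k : ι → ℕ} (hk : s.gcd k = 1)
    {ε : ι → R} (hε : ∀ i ∈ s, ε i ^ 2 = 1) {p : R[T;T⁻¹]}
    (hp : ∀ i ∈ s, p ∣ 1 + C (ε i) * T (k i)) : p ∣ (1 - T 1) * (1 + T 1) := by
  have hp2 (i : ι) (hi : i ∈ s) : p ∣ 1 - (T 1 ^ 2) ^ k i := by
    have hε2 : C (ε i) ^ 2 = 1 := by rw [← map_pow, hε i hi, map_one]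
    calc p ∣ 1 + C (ε i) * T (k i) := hp i hi
      _ = 1 + C (ε i) * T 1 ^ k i := by rw [T_pow, mul_one]
      _ ∣ 1 - (T 1 ^ k i) ^ 2 := one_add_mul_dvd_one_sub_sq hε2 _
      _ = 1 - (T 1 ^ 2) ^ k i := by rw [← pow_mul, ← pow_mul, mul_comm]
  have := dvd_one_sub_pow_finset_gcd hp2
  rw [hk, pow_one] at this
  exact this.trans ⟨1, by ring⟩

theorem not_forall_one_sub_T_dvd_and_one_add_T_dvd {ι : Type*} {s : Finset ι} {k : ι → ℕ}
    (hk : s.gcd k = 1) (ε : ι → ℤ) :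
    ¬ ((∀ i ∈ s, (1 - T 1 : ℤ[T;T⁻¹]) ∣ 1 + C (ε i) * T (k i)) ∧
      (∀ i ∈ s, (1 + T 1 : ℤ[T;T⁻¹]) ∣ 1 + C (ε i) * T (k i))) := by
  rintro ⟨hsub, hadd⟩
  have heven (i : ι) (hi : i ∈ s) : Even (k i) := by
    have h := hadd i hi
    rw [eq_neg_one_of_one_sub_T_dvd (hsub i hi), map_neg, map_one, neg_one_mul,
      ← sub_eq_add_neg] at h
    exact even_of_one_add_T_dvd h
  have h2 : 2 ∣ s.gcd k := Finset.dvd_gcd fun i hi => (heven i hi).two_dvd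
  rw [hk] at h2
  omega

end LaurentPolynomial

theorem veering_common_divisors_of_one_pm_tk_general
    (n : ℕ) (k : Fin n → ℕ)
    (hgcd : Finset.univ.gcd k = 1)
    (ε : Fin n → ℤ) (hε : ∀ i, ε i = 1 ∨ ε i = -1) :
    (∀ p : LaurentPolynomial ℤ,
        (∀ i, p ∣ 1 + C (ε i) * T (k i : ℤ)) →
        (p ∣ 1 - T 1 ∨ p ∣ 1 + T 1)) ∧
    ¬ ((∀ i, (1 - T 1 : LaurentPolynomial ℤ) ∣ 1 + C (ε i) * T (k i : ℤ)) ∧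
       (∀ i, (1 + T 1 : LaurentPolynomial ℤ) ∣ 1 + C (ε i) * T (k i : ℤ))) := by
  have not_both := not_forall_one_sub_T_dvd_and_one_add_T_dvd hgcd ε
  refine ⟨fun p hp => ?_, fun ⟨h1, h2⟩ => not_both ⟨fun i _ => h1 i, fun i _ => h2 i⟩⟩
  have hp2 : p ∣ (1 - T 1) * (1 + T 1) :=
    dvd_one_sub_T_mul_one_add_T hgcd (fun i _ => sq_eq_one_iff.2 (hε i)) fun i _ => hp i
  exact dvd_or_dvd_of_dvd_prime_mul_prime prime_one_sub_T prime_one_add_T hp2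
    fun ⟨h1, h2⟩ => not_both ⟨fun i _ => h1.trans (hp i), fun i _ => h2.trans (hp i)⟩

/-- Let `k₁, …, kₙ` be positive integers with gcd `1` and
`εᵢ ∈ {1, -1}` signs.  Then any common divisor in `ℤ[t,t⁻¹]` of the elements
`1 + εᵢ t^{kᵢ}` divides `1 - t` or `1 + t` (i.e. is a unit times a divisor of
one of them); moreover `1 - t` and `1 + t` cannot both be common divisors. -/
theorem veering_common_divisors_of_one_pm_tk
    (n : ℕ) (k : Fin n → ℕ) (hk : ∀ i, 0 < k i)
    (hgcd : Finset.univ.gcd k = 1)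
    (ε : Fin n → ℤ) (hε : ∀ i, ε i = 1 ∨ ε i = -1) :
    (∀ p : LaurentPolynomial ℤ,
        (∀ i, p ∣ 1 + C (ε i) * T (k i : ℤ)) →
        (p ∣ 1 - T 1 ∨ p ∣ 1 + T 1)) ∧
    ¬ ((∀ i, (1 - T 1 : LaurentPolynomial ℤ) ∣ 1 + C (ε i) * T (k i : ℤ)) ∧
       (∀ i, (1 + T 1 : LaurentPolynomial ℤ) ∣ 1 + C (ε i) * T (k i : ℤ))) :=
  veering_common_divisors_of_one_pm_tk_general n k hgcd ε hε
end

section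
/- Let D be a finite directed graph and let η be a real 1-cocycle class on D (an element of H¹(D; ℝ)) whose evaluation on every directed cycle of D is nonnegative. Then η is represented by a cocycle m : E(D) → ℝ taking nonnegative values on every directed edge. If moreover η is strictly positive on every directed cycle, then m can be chosen strictly positive on every directed edge. -/
/-! Let `p v` be the least `c`-weight of a trail (a walk without repeated edges) ending at `v`.
Extending an optimal trail to `s e` by `e` gives `p (t e) ≤ p (s e) + c e`; if `e` already occurs in
the trail, cut the trail just after `e` instead: the discarded part together with `e` is a closed
trail, of nonnegative weight. So `h = -p` is a potential. In the strict case there are only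
finitely many closed trails, so `c - ε` stays nonnegative on them for some `ε > 0`, and the
potential for `c - ε` makes `c + δh ≥ ε`. -/

open Filter Topology

variable {V E : Type*} {s t : E → V} {c : E → ℝ}

def IsWalk (s t : E → V) (l : List E) : Prop := l.IsChain fun a b => t a = s b

/-- The empty trail ends at every vertex. -/
def IsTrailTo (s t : E → V) (v : V) (l : List E) : Prop :=
  l.Nodup ∧ IsWalk s t l ∧ ∀ a ∈ l.getLast?, t a = v

def IsClosedWalk (s t : E → V) (l : List E) : Prop :=
  l ≠ [] ∧ IsWalk s t l ∧ ∀ a ∈ l.getLast?, ∀ b ∈ l.head?, t a = s b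

theorem IsClosedWalk.exists_fin_cycle {l : List E} (hl : IsClosedWalk s t l) (c : E → ℝ) :
    ∃ (n : ℕ) (γ : Fin (n + 1) → E),
      (∀ i, t (γ i) = s (γ (i + 1))) ∧ ∑ i, c (γ i) = (l.map c).sum := by
  obtain ⟨hne, hwalk, hwrap⟩ := hl
  obtain ⟨e, B, rfl⟩ := List.exists_cons_of_ne_nil hne
  refine ⟨B.length, fun i => (e :: B)[i], fun i => ?_, Fin.sum_univ_fun_getElem (e :: B) c⟩
  rcases (Fin.le_last i).lt_or_eq with hi | rfl
  · show t (e :: B)[(i : ℕ)] = s (e :: B)[((i + 1 : Fin _) : ℕ)]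
    simp only [Fin.val_add_one_of_lt hi]
    exact List.isChain_iff_getElem.1 hwalk i (by simpa [Fin.lt_def] using hi)
  · simp only [Fin.last_add_one]
    exact hwrap _ (by simp [List.getLast?_eq_getElem?]) e rfl

theorem List.finite_setOf_nodup [Finite E] : {l : List E | l.Nodup}.Finite := by
  have := Fintype.ofFinite E
  exact (List.finite_length_le E (Fintype.card E)).subset fun l hl => hl.length_le_card

theorem exists_trail_weight_le_add (hc : ∀ l, IsClosedWalk s t l → l.Nodup → 0 ≤ (l.map c).sum)
    {e : E} {P : List E} (hP : IsTrailTo s t (s e) P) :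
    ∃ Q, IsTrailTo s t (t e) Q ∧ (Q.map c).sum ≤ (P.map c).sum + c e := by
  obtain ⟨hnodup, hwalk, hend⟩ := hP
  by_cases he : e ∈ P
  · obtain ⟨A, B, rfl⟩ := List.append_of_mem he
    have hsplit : A ++ e :: B = (A ++ [e]) ++ B := by simp
    have hcycle : IsClosedWalk s t (e :: B) := by
      refine ⟨List.cons_ne_nil e B, hwalk.right_of_append, fun a ha b hb => ?_⟩
      obtain rfl : b = e := by simpa using hb.symm
      exact hend a (by simpa [List.getLast?_append] using ha)
    have := hc _ hcycle hnodup.of_append_right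
    refine ⟨A ++ [e], ⟨?_, ?_, by simp⟩, ?_⟩
    · exact (hsplit ▸ hnodup).of_append_left
    · exact (hsplit ▸ hwalk).left_of_append
    · simp only [List.map_append, List.sum_append, List.map_cons, List.sum_cons, List.map_nil,
        List.sum_nil] at this ⊢
      linarith
  · refine ⟨P ++ [e], ⟨?_, ?_, by simp⟩, by simp⟩
    · simp only [List.nodup_append, hnodup, List.nodup_singleton, List.mem_singleton, true_and]
      rintro a ha _ rfl rfl
      exact he ha
    · exact hwalk.append (List.isChain_singleton e) (by simpa using hend)

theorem exists_min_weight_trail [Finite E] (s t : E → V) (c : E → ℝ) (v : V) :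
    ∃ P, IsTrailTo s t v P ∧ ∀ Q, IsTrailTo s t v Q → (P.map c).sum ≤ (Q.map c).sum :=
  Set.exists_min_image {l | IsTrailTo s t v l} (fun l => (l.map c).sum)
    (List.finite_setOf_nodup.subset fun _ hl => hl.1) ⟨[], List.nodup_nil, List.isChain_nil, by simp⟩

theorem exists_potential_nonneg [Finite E]
    (hc : ∀ l, IsClosedWalk s t l → l.Nodup → 0 ≤ (l.map c).sum) :
    ∃ h : V → ℝ, ∀ e, 0 ≤ c e + (h (t e) - h (s e)) := by
  choose P hP hmin using exists_min_weight_trail s t c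
  refine ⟨fun v => -((P v).map c).sum, fun e => ?_⟩
  obtain ⟨Q, hQ, hQle⟩ := exists_trail_weight_le_add hc (hP (s e))
  linarith [hmin (t e) Q hQ]

theorem exists_pos_mul_length_le [Finite E] (hc : ∀ l, IsClosedWalk s t l → 0 < (l.map c).sum) :
    ∃ ε > 0, ∀ l, IsClosedWalk s t l → l.Nodup → ε * l.length ≤ (l.map c).sum := by
  have hfin : {l : List E | IsClosedWalk s t l ∧ l.Nodup}.Finite :=
    List.finite_setOf_nodup.subset fun l hl => hl.2
  have hsmall : ∀ᶠ ε in 𝓝[>] (0 : ℝ), ∀ l ∈ {l : List E | IsClosedWalk s t l ∧ l.Nodup},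
      ε * l.length ≤ (l.map c).sum := by
    refine (eventually_all_finite hfin).2 fun l hl => nhdsWithin_le_nhds ?_
    exact ((continuous_mul_const _).tendsto 0).eventually (ge_mem_nhds (by simpa using hc l hl.1))
  obtain ⟨ε, hε, hεpos⟩ := (hsmall.and self_mem_nhdsWithin).exists
  exact ⟨ε, hεpos, fun l hl hnodup => hε l ⟨hl, hnodup⟩⟩

theorem veering_nonnegative_cocycle_representative_general
    (V E : Type) [Fintype E] (s t : E → V) (c : E → ℝ)
    (hnn : ∀ (n : ℕ) (γ : Fin (n + 1) → E),
      (∀ i, t (γ i) = s (γ (i + 1))) → 0 ≤ ∑ i, c (γ i)) :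
    (∃ h : V → ℝ, ∀ e, 0 ≤ c e + (h (t e) - h (s e))) ∧
    ((∀ (n : ℕ) (γ : Fin (n + 1) → E),
        (∀ i, t (γ i) = s (γ (i + 1))) → 0 < ∑ i, c (γ i)) →
      ∃ h : V → ℝ, ∀ e, 0 < c e + (h (t e) - h (s e))) := by
  refine ⟨exists_potential_nonneg fun l hl _ => ?_, fun hpos => ?_⟩
  · obtain ⟨n, γ, hγ, hsum⟩ := hl.exists_fin_cycle c
    exact hsum ▸ hnn n γ hγ
  have hcycle : ∀ l, IsClosedWalk s t l → 0 < (l.map c).sum := fun l hl => by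
    obtain ⟨n, γ, hγ, hsum⟩ := hl.exists_fin_cycle c
    exact hsum ▸ hpos n γ hγ
  obtain ⟨ε, hε, hεle⟩ := exists_pos_mul_length_le hcycle
  obtain ⟨h, hh⟩ := exists_potential_nonneg (c := fun e => c e - ε) fun l hl hnodup => by
    have := hεle l hl hnodup
    simp only [sub_eq_add_neg, List.sum_map_add, List.map_const', List.sum_replicate, nsmul_eq_mul]
    linarith
  exact ⟨h, fun e => by linarith [hh e]⟩

/-- Let `D` be a finite directed graph (vertex set `V`, edge
set `E`, with source `s` and target `t`) and let `c : E → ℝ` be a cochain whose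
sum over every directed cycle is nonnegative.  Then the cohomology class of `c`
is represented by a nonnegative cocycle, i.e. there is a potential `h : V → ℝ`
with `c e + δh(e) ≥ 0` on every edge.  If `c` is strictly positive on every
directed cycle, the representative can be taken strictly positive on every
edge.  (Directed cycles of length `n + 1` are maps `Fin (n+1) → E` with
cyclically matching endpoints.) -/
theorem veering_nonnegative_cocycle_representative
    (V E : Type) [Fintype V] [Fintype E] (s t : E → V) (c : E → ℝ)
    (hnn : ∀ (n : ℕ) (γ : Fin (n + 1) → E),
      (∀ i, t (γ i) = s (γ (i + 1))) → 0 ≤ ∑ i, c (γ i)) :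
    (∃ h : V → ℝ, ∀ e, 0 ≤ c e + (h (t e) - h (s e))) ∧
    ((∀ (n : ℕ) (γ : Fin (n + 1) → E),
        (∀ i, t (γ i) = s (γ (i + 1))) → 0 < ∑ i, c (γ i)) →
      ∃ h : V → ℝ, ∀ e, 0 < c e + (h (t e) - h (s e))) :=
  veering_nonnegative_cocycle_representative_general V E s t c hnn
end

section
/- Let D be a finite strongly connected directed graph. Then every cycle in the underlying undirected graph of D is homologous (in H₁(D; ℤ)) to an integer linear combination of directed cycles of D. Consequently, the classes of directed cycles generate H₁(D; ℤ). -/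
/-!
Fix a base vertex `v₀` and directed walks `P v` from `v₀` to `v` and `Q v` from `v` back to `v₀`.
For every edge `e`, the closed directed walks `P (s e) · e · Q (t e)` and `P (s e) · Q (s e)`
differ, as 1-chains, by `e + Q (t e) - Q (s e)`. Weighting by `z e` and summing over all edges,
the `Q`-terms add up to `∑ v, (∂z) v • Q v = 0`, so `z` is an integer combination of chains of
closed directed walks.
-/

section DirectedGraph

variable {V E : Type*} (s t : E → V)

def IsDirWalk (u v : V) (l : List E) : Prop :=
  ∃ h : l ≠ [], l.IsChain (fun e f => t e = s f) ∧ s (l.head h) = u ∧ t (l.getLast h) = v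

def walkChain [DecidableEq E] (l : List E) : E → ℤ := fun f => l.count f

def directedCycleChains [DecidableEq E] : Set (E → ℤ) :=
  {c | ∃ (n : ℕ) (γ : Fin (n + 1) → E),
    (∀ i, t (γ i) = s (γ (i + 1))) ∧ c = fun e => ∑ i, if γ i = e then 1 else 0}

variable {s t}

theorem isDirWalk_singleton (e : E) : IsDirWalk s t (s e) (t e) [e] :=
  ⟨List.cons_ne_nil e [], List.isChain_singleton e, rfl, rfl⟩

theorem IsDirWalk.append {u v w : V} {l m : List E}
    (hl : IsDirWalk s t u v l) (hm : IsDirWalk s t v w m) : IsDirWalk s t u w (l ++ m) := by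
  obtain ⟨hl₀, hl_chain, hl_head, hl_last⟩ := hl
  obtain ⟨hm₀, hm_chain, hm_head, hm_last⟩ := hm
  refine ⟨by simp [hl₀], hl_chain.append hm_chain ?_, ?_, ?_⟩
  · simp only [List.getLast?_eq_some_getLast hl₀, List.head?_eq_some_head hm₀, Option.mem_def,
      Option.some_inj]
    rintro _ rfl _ rfl
    rw [hl_last, hm_head]
  · rwa [List.head_append_of_ne_nil hl₀]
  · rwa [List.getLast_append_of_ne_nil _ hm₀]

theorem isDirWalk_ofFn {u v : V} {n : ℕ} {p : Fin (n + 1) → E} (hu : s (p 0) = u)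
    (hv : t (p (Fin.last n)) = v) (hp : ∀ i : Fin n, t (p i.castSucc) = s (p i.succ)) :
    IsDirWalk s t u v (List.ofFn p) := by
  refine ⟨by simp, ?_, by rwa [List.head_ofFn], by rw [List.getLast_ofFn]; exact hv⟩
  rw [List.isChain_iff_getElem]
  intro i hi
  simp only [List.length_ofFn] at hi
  simp only [List.getElem_ofFn]
  exact hp ⟨i, by omega⟩

theorem List.count_ofFn_eq_sum [DecidableEq E] {n : ℕ} (γ : Fin n → E) (f : E) :
    ((List.ofFn γ).count f : ℤ) = ∑ i, if γ i = f then 1 else 0 := by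
  induction n with
  | zero => simp
  | succ n ih =>
    rw [List.ofFn_succ, List.count_cons, Fin.sum_univ_succ, ← ih]
    by_cases h : γ 0 = f <;> simp [h, add_comm]

theorem IsDirWalk.walkChain_mem_directedCycleChains [DecidableEq E] {u : V} {l : List E}
    (hl : IsDirWalk s t u u l) : walkChain l ∈ directedCycleChains s t := by
  obtain ⟨hl₀, hl_chain, hl_head, hl_last⟩ := hl
  obtain ⟨a, l, rfl⟩ := List.exists_cons_of_ne_nil hl₀
  refine ⟨l.length, (a :: l).get, fun i => ?_, ?_⟩
  · induction i using Fin.lastCases with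
    | last =>
      rw [Fin.last_add_one]
      rw [List.head_cons] at hl_head
      simpa [List.getLast_eq_getElem, hl_head] using hl_last
    | cast i =>
      rw [Fin.coeSucc_eq_succ]
      exact List.isChain_iff_getElem.mp hl_chain i (by simp)
  · funext f
    rw [← List.count_ofFn_eq_sum, List.ofFn_get]
    rfl

theorem walkChain_append [DecidableEq E] (l m : List E) :
    walkChain (l ++ m) = walkChain l + walkChain m := by
  funext f
  simp [walkChain, List.count_append]

theorem walkChain_cons [DecidableEq E] (e : E) (l : List E) :
    walkChain (e :: l) = Pi.single e 1 + walkChain l := by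
  funext f
  simp only [walkChain, List.count_cons, beq_iff_eq, Pi.add_apply, Pi.single_apply]
  by_cases h : e = f
  · simp [h, add_comm]
  · simp [h, Ne.symm h]

variable [Fintype V] [Fintype E] [DecidableEq V]

theorem sum_smul_sub_eq_zero_of_boundary_eq_zero {M : Type*} [AddCommGroup M] {z : E → ℤ}
    (hz : ∀ v : V, ∑ e, z e * ((if t e = v then 1 else 0) - (if s e = v then 1 else 0)) = 0)
    (q : V → M) : ∑ e, z e • (q (t e) - q (s e)) = 0 := by
  have hq : ∀ e, q (t e) - q (s e) =
      ∑ v, ((if t e = v then 1 else 0) - (if s e = v then 1 else 0) : ℤ) • q v := by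
    intro e
    simp [sub_smul, Finset.sum_sub_distrib, ite_smul]
  calc ∑ e, z e • (q (t e) - q (s e))
      = ∑ v, (∑ e, z e * ((if t e = v then 1 else 0) - (if s e = v then 1 else 0))) • q v := by
        simp only [hq, Finset.smul_sum, smul_smul, Finset.sum_smul]
        exact Finset.sum_comm
    _ = 0 := by simp [hz]

theorem eq_sum_smul_walkChain_sub_walkChain [DecidableEq E] {z : E → ℤ}
    (hz : ∀ v : V, ∑ e, z e * ((if t e = v then 1 else 0) - (if s e = v then 1 else 0)) = 0)
    (P Q : V → List E) :
    z = ∑ e, z e • (walkChain (P (s e) ++ e :: Q (t e)) - walkChain (P (s e) ++ Q (s e))) := by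
  have hloop : ∀ e, walkChain (P (s e) ++ e :: Q (t e)) - walkChain (P (s e) ++ Q (s e)) =
      Pi.single e 1 + (walkChain (Q (t e)) - walkChain (Q (s e))) := by
    intro e
    simp only [walkChain_append, walkChain_cons]
    abel
  rw [Finset.sum_congr rfl fun e _ => by rw [hloop, smul_add, ← Pi.single_smul, smul_eq_mul,
    mul_one], Finset.sum_add_distrib, Finset.univ_sum_single,
    sum_smul_sub_eq_zero_of_boundary_eq_zero hz (fun v => walkChain (Q v)), add_zero]

end DirectedGraph

/-- Let `D` be a finite strongly connected directed graph.
Every 1-cycle of the underlying graph (element of `ker ∂ = H₁(D;ℤ)`) is an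
integer linear combination of (the chains of) directed cycles; i.e. the classes
of directed cycles generate `H₁(D; ℤ)`. -/
theorem veering_directed_cycles_generate_H1
    (V E : Type) [Fintype V] [Fintype E] [DecidableEq V] [DecidableEq E]
    (s t : E → V)
    (hsc : ∀ u v : V, ∃ (n : ℕ) (p : Fin (n + 1) → E),
      s (p 0) = u ∧ t (p (Fin.last n)) = v ∧
      ∀ i : Fin n, t (p i.castSucc) = s (p i.succ))
    (z : E → ℤ)
    (hz : ∀ v : V, ∑ e, z e *
      ((if t e = v then 1 else 0) - (if s e = v then 1 else 0)) = 0) :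
    z ∈ AddSubgroup.closure {c : E → ℤ | ∃ (n : ℕ) (γ : Fin (n + 1) → E),
      (∀ i, t (γ i) = s (γ (i + 1))) ∧
      c = fun e => ∑ i, if γ i = e then 1 else 0} := by
  obtain hV | ⟨⟨v₀⟩⟩ := isEmpty_or_nonempty V
  · have : IsEmpty E := ⟨fun e => hV.false (s e)⟩
    exact Subsingleton.elim 0 z ▸ zero_mem _
  have hwalk (u v : V) : ∃ l, IsDirWalk s t u v l := by
    obtain ⟨n, p, hu, hv, hp⟩ := hsc u v
    exact ⟨_, isDirWalk_ofFn hu hv hp⟩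
  choose W hW using hwalk
  have hloop {l : List E} (hl : IsDirWalk s t v₀ v₀ l) :
      walkChain l ∈ AddSubgroup.closure (directedCycleChains s t) :=
    AddSubgroup.subset_closure hl.walkChain_mem_directedCycleChains
  rw [eq_sum_smul_walkChain_sub_walkChain hz (W v₀) (W · v₀)]
  refine sum_mem fun e _ => zsmul_mem (sub_mem (hloop ?_) (hloop ?_)) _
  · exact (hW v₀ (s e)).append ((isDirWalk_singleton e).append (hW (t e) v₀))
  · exact (hW v₀ (s e)).append (hW (s e) v₀)
end

section
/- Let R be a commutative ring, G a group acting on a finite set F by a permutation A : F → F with cycles c₁, …, cₙ of lengths k₁, …, kₙ. Suppose M is the R[G]-module presented by the free module R[G]^F modulo the relations f + A(f) = 0 for all f ∈ F, where lifting around the cycle cᵢ returns the chosen generator multiplied by a group element gᵢ ∈ G. Then M is isomorphic as an R[G]-module to the direct sum ⊕ᵢ R[G]/(1 + (−1)^{kᵢ+1} gᵢ), and consequently the determinant of the presentation matrix equals ∏ᵢ (1 + (−1)^{kᵢ+1} gᵢ) up to a unit of R[G]. -/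
/-!
The matrix `L = 1 + P` is block diagonal, with one block per cycle of `A`, so its determinant
and its cokernel split over the cycles. For a cycle of length `m` with labels `w₀, …, w_{m-1}`,
only the identity and the cyclic shift (of sign `(-1)^(m+1)`) contribute to the Leibniz
expansion of `det (1 + P)`, which gives `1 - (-1)^m ∏ w`. In the cokernel, the relations
`e_j + w_j e_{j+1} = 0` transport the generator `e_0` around the cycle: `e_t = c_t e_0` with
`c_t = ∏_{s<t} (-w_s)⁻¹`, and coming back to `e_0` after `m` steps imposes exactly
`(1 - (-1)^m ∏ w) e_0 = 0`. Conversely `e_j ↦ c_j` is well defined modulo that ideal, since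
`c_m ≡ 1` makes `c` periodic there.
-/

open Finset Matrix Equiv
open scoped DirectSum

namespace Equiv.Perm

theorem IsCycle.eq_one_or_eq_of_forall_apply_eq_or {ι : Type*} [Finite ι] {σ τ : Perm ι}
    (hτ : τ.IsCycle) (h : ∀ x, σ x = x ∨ σ x = τ x) : σ = 1 ∨ σ = τ := by
  by_cases hσ : ∀ x, σ x = x
  · exact .inl (ext hσ)
  push Not at hσ
  obtain ⟨x, hx⟩ := hσ
  have hσx : σ x = τ x := (h x).resolve_left hx
  have hτx : τ x ≠ x := hσx ▸ hx
  have orbit : ∀ t : ℕ, σ ((τ ^ t) x) = (τ ^ (t + 1)) x := by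
    intro t
    induction t with
    | zero => simpa using hσx
    | succ t ih =>
      rw [pow_succ' τ (t + 1), mul_apply]
      refine (h _).resolve_left fun hfix => hτx ?_
      have hstep := σ.injective (hfix.trans ih.symm)
      rw [pow_succ, mul_apply] at hstep
      exact (τ ^ t).injective hstep
  refine .inr (ext fun y => ?_)
  by_cases hy : τ y = y
  · exact (h y).elim (·.trans hy.symm) id
  · obtain ⟨t, rfl⟩ := (hτ.sameCycle hτx hy).exists_nat_pow_eq
    rw [orbit, pow_succ', mul_apply]

end Equiv.Perm

namespace Matrix

variable {S : Type*} [CommRing S]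

theorem det_one_add_of_isCycle {ι : Type*} [Fintype ι] [DecidableEq ι] {τ : Perm ι}
    (hτ : τ.IsCycle) (hsupp : τ.support = univ) (w : ι → S) :
    det (1 + of fun i j => if i = τ j then w j else 0) =
      1 - (-1) ^ Fintype.card ι * ∏ j, w j := by
  set M : Matrix ι ι S := 1 + of fun i j => if i = τ j then w j else 0
  have hτ_ne : ∀ j, τ j ≠ j := fun j => Perm.mem_support.1 (hsupp ▸ mem_univ j)
  have hvanish :
      ∀ σ ∉ ({1, τ} : Finset (Perm ι)), Perm.sign σ • ∏ j, M (σ j) j = 0 := by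
    intro σ hσ
    obtain ⟨j, hj1, hjτ⟩ : ∃ j, σ j ≠ j ∧ σ j ≠ τ j := by
      by_contra! h
      rcases hτ.eq_one_or_eq_of_forall_apply_eq_or (fun j => or_iff_not_imp_left.2 (h j))
        with rfl | rfl <;> simp at hσ
    rw [prod_eq_zero (mem_univ j) (by simp [M, hj1, hjτ]), smul_zero]
  rw [det_apply, ← sum_subset (subset_univ _) fun σ _ => hvanish σ, sum_pair hτ.ne_one.symm]
  simp [M, hτ_ne, (hτ_ne _).symm, hτ.sign, hsupp, Units.smul_def, zsmul_eq_mul]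
  ring

section BlockDiagonal

variable {o : Type*} [Fintype o] [DecidableEq o] {m n : o → Type*} [∀ i, Fintype (n i)]

theorem det_blockDiagonal' [∀ i, DecidableEq (n i)] (M : ∀ i, Matrix (n i) (n i) S) :
    (blockDiagonal' M).det = ∏ i, (M i).det := by
  -- any linear order on `o` makes `blockDiagonal' M` block triangular
  let : LinearOrder o := LinearOrder.lift' _ (Fintype.equivFin o).injective
  rw [(blockTriangular_blockDiagonal' M).det, ← prod_subset (subset_univ _)]
  · refine prod_congr rfl fun i _ => ?_
    rw [← det_submatrix_equiv_self (sigmaSubtype i) (M i)]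
    congr 1
    ext ⟨⟨i₁, a⟩, h₁⟩ ⟨⟨i₂, b⟩, h₂⟩
    dsimp only at h₁ h₂
    subst h₁ h₂
    simp [toSquareBlock, toSquareBlockProp]
  · intro i _ hi
    have : IsEmpty (n i) := ⟨fun a => hi (mem_image.2 ⟨⟨i, a⟩, mem_univ _, rfl⟩)⟩
    exact det_isEmpty

theorem blockDiagonal'_mulVec_apply (M : ∀ i, Matrix (m i) (n i) S) (x : (Σ i, n i) → S)
    (i : o) (a : m i) :
    (blockDiagonal' M *ᵥ x) ⟨i, a⟩ = (M i *ᵥ fun b => x ⟨i, b⟩) a := by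
  simp [mulVec, dotProduct, Fintype.sum_sigma, blockDiagonal'_apply']

theorem map_piCurry_range_blockDiagonal'_mulVecLin (M : ∀ i, Matrix (m i) (n i) S) :
    (LinearMap.range (blockDiagonal' M).mulVecLin).map
        (LinearEquiv.piCurry S fun i (_ : m i) => S :
          ((Σ i, m i) → S) →ₗ[S] ∀ i, m i → S) =
      Submodule.pi Set.univ fun i => LinearMap.range (M i).mulVecLin := by
  ext x
  simp only [Submodule.mem_map, LinearMap.mem_range, Submodule.mem_pi, Set.mem_univ, true_implies]
  constructor
  · rintro ⟨_, ⟨y, rfl⟩, rfl⟩ i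
    exact ⟨fun b => y ⟨i, b⟩, funext fun a => (blockDiagonal'_mulVec_apply M y i a).symm⟩
  · intro hx
    choose y hy using hx
    refine ⟨_, ⟨fun b => y b.1 b.2, rfl⟩, ?_⟩
    ext i a
    exact (blockDiagonal'_mulVec_apply M _ i a).trans (congrFun (hy i) a)

noncomputable def blockDiagonal'CokernelEquiv (M : ∀ i, Matrix (m i) (n i) S) :
    (((Σ i, m i) → S) ⧸ LinearMap.range (blockDiagonal' M).mulVecLin) ≃ₗ[S]
      ∀ i, (m i → S) ⧸ LinearMap.range (M i).mulVecLin :=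
  (Submodule.Quotient.equiv _ _ _ (map_piCurry_range_blockDiagonal'_mulVecLin M)).trans
    (Submodule.quotientPi _)

end BlockDiagonal

end Matrix

theorem ZMod.isCycle_addRight_one {m : ℕ} [NeZero m] [Nontrivial (ZMod m)] :
    (Equiv.addRight (1 : ZMod m)).IsCycle :=
  ⟨0, by simp, fun y _ => ⟨y.val, by simp⟩⟩

theorem ZMod.support_addRight_one {m : ℕ} [NeZero m] [Nontrivial (ZMod m)] :
    (Equiv.addRight (1 : ZMod m)).support = univ := by
  ext; simp

theorem ZMod.prod_range_natCast {m : ℕ} [NeZero m] {M : Type*} [CommMonoid M] (f : ZMod m → M) :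
    ∏ s ∈ range m, f s = ∏ j, f j :=
  prod_nbij (↑) (by simp) (fun a ha b hb h => by
      rw [← ZMod.val_cast_of_lt (mem_range.1 ha), ← ZMod.val_cast_of_lt (mem_range.1 hb), h])
    (fun j _ => ⟨j.val, by simp [ZMod.val_lt], ZMod.natCast_zmod_val j⟩) fun _ _ => rfl

variable {S : Type*} [CommRing S] {m : ℕ}

def cycleMatrix (w : ZMod m → S) : Matrix (ZMod m) (ZMod m) S :=
  1 + of fun i j => if i = j + 1 then w j else 0

theorem cycleMatrix_mulVec_single_one [NeZero m] (w : ZMod m → S) (j : ZMod m) :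
    cycleMatrix w *ᵥ Pi.single j 1 = Pi.single j 1 + Pi.single (j + 1) (w j) := by
  ext i
  simp [cycleMatrix, Pi.single_apply, one_apply]

theorem det_cycleMatrix [NeZero m] (w : ZMod m → S) :
    (cycleMatrix w).det = 1 - (-1) ^ m * ∏ j, w j := by
  by_cases hm : m = 1
  · subst hm
    simp [cycleMatrix, Subsingleton.elim (1 : ZMod 1) 0]
  · have : Fact (1 < m) := ⟨by have := NeZero.ne m; omega⟩
    have h := det_one_add_of_isCycle ZMod.isCycle_addRight_one ZMod.support_addRight_one w
    rwa [ZMod.card] at h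

section CycleCokernel

variable (u : ZMod m → Sˣ)

def cycleTransport (t : ℕ) : Sˣ := (∏ s ∈ range t, -u s)⁻¹

@[simp] theorem cycleTransport_zero : cycleTransport u 0 = 1 := by simp [cycleTransport]

theorem mul_cycleTransport_succ (t : ℕ) :
    (u t : S) * cycleTransport u (t + 1) = -cycleTransport u t := by
  simp [cycleTransport, prod_range_succ]

theorem cycleTransport_add_card (t : ℕ) :
    cycleTransport u (t + m) = cycleTransport u t * cycleTransport u m := by
  simp [cycleTransport, add_comm t, prod_range_add, mul_comm]

theorem inv_cycleTransport_card [NeZero m] :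
    (↑(cycleTransport u m)⁻¹ : S) = (-1) ^ m * ∏ j, (u j : S) := by
  simp [cycleTransport, ZMod.prod_range_natCast (fun j => -u j), prod_neg]

variable [NeZero m]

def cycleIdeal : Ideal S := Ideal.span {1 - (-1) ^ m * ∏ j, (u j : S)}

theorem mk_cycleTransport_card : Ideal.Quotient.mk (cycleIdeal u) (cycleTransport u m) = 1 := by
  have hinv : Ideal.Quotient.mk (cycleIdeal u) (↑(cycleTransport u m)⁻¹ : S) = 1 := by
    rw [inv_cycleTransport_card, ← map_one (Ideal.Quotient.mk _), Ideal.Quotient.eq]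
    exact Ideal.mem_span_singleton.2 ⟨-1, by ring⟩
  calc Ideal.Quotient.mk (cycleIdeal u) (cycleTransport u m)
      = Ideal.Quotient.mk _ (cycleTransport u m : S) *
          Ideal.Quotient.mk _ (↑(cycleTransport u m)⁻¹ : S) := by
        rw [hinv, mul_one]
    _ = 1 := by rw [← map_mul, Units.mul_inv, map_one]

theorem mk_cycleTransport_natCast_val (t : ℕ) :
    Ideal.Quotient.mk (cycleIdeal u) (cycleTransport u (t : ZMod m).val) =
      Ideal.Quotient.mk (cycleIdeal u) (cycleTransport u t) := by
  have hperiod : ∀ r q, Ideal.Quotient.mk (cycleIdeal u) (cycleTransport u (r + m * q)) =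
      Ideal.Quotient.mk (cycleIdeal u) (cycleTransport u r) := by
    intro r q
    induction q with
    | zero => simp
    | succ q ih =>
      rw [mul_add_one, ← add_assoc, cycleTransport_add_card, Units.val_mul, map_mul, ih,
        mk_cycleTransport_card, mul_one]
  rw [ZMod.val_natCast, ← hperiod (t % m) (t / m), Nat.mod_add_div]

theorem mkQ_single_natCast_eq_cycleTransport_smul (t : ℕ) :
    (LinearMap.range (cycleMatrix fun j => (u j : S)).mulVecLin).mkQ (Pi.single (t : ZMod m) 1) =
      (cycleTransport u t : S) •
        (LinearMap.range (cycleMatrix fun j => (u j : S)).mulVecLin).mkQ (Pi.single 0 1) := by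
  set q := (LinearMap.range (cycleMatrix fun j => (u j : S)).mulVecLin).mkQ
  induction t with
  | zero => simp
  | succ t ih =>
    have hrel :
        q (Pi.single (t : ZMod m) 1) + (u t : S) • q (Pi.single ((t : ZMod m) + 1) 1) = 0 := by
      rw [← map_smul, ← map_add, Submodule.mkQ_apply, Submodule.Quotient.mk_eq_zero,
        ← Pi.single_smul, smul_eq_mul, mul_one]
      exact ⟨_, cycleMatrix_mulVec_single_one _ _⟩
    calc q (Pi.single ((t + 1 : ℕ) : ZMod m) 1)
        = (↑(u t)⁻¹ : S) • ((u t : S) • q (Pi.single ((t : ZMod m) + 1) 1)) := by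
          rw [smul_smul, Units.inv_mul, one_smul, Nat.cast_succ]
      _ = (cycleTransport u (t + 1) : S) • q (Pi.single 0 1) := by
          rw [eq_neg_of_add_eq_zero_right hrel, ih, smul_neg, smul_smul, ← neg_smul]
          congr 1
          rw [← mul_neg, ← mul_cycleTransport_succ, ← mul_assoc, Units.inv_mul, one_mul]

theorem mk_cycleTransport_add_smul_mk_cycleTransport (j : ZMod m) :
    Ideal.Quotient.mk (cycleIdeal u) (cycleTransport u j.val) +
      (u j : S) • Ideal.Quotient.mk (cycleIdeal u) (cycleTransport u (j + 1).val) = 0 := by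
  have hrel := mul_cycleTransport_succ u j.val
  rw [ZMod.natCast_zmod_val] at hrel
  have hj : j + 1 = ((j.val + 1 : ℕ) : ZMod m) := by simp
  rw [hj, mk_cycleTransport_natCast_val, Algebra.smul_def, Ideal.Quotient.algebraMap_eq,
    ← map_mul, ← map_add, hrel, add_neg_cancel, map_zero]

noncomputable def cycleCokernelToQuot :
    ((ZMod m → S) ⧸ LinearMap.range (cycleMatrix fun j => (u j : S)).mulVecLin) →ₗ[S]
      S ⧸ cycleIdeal u :=
  Submodule.liftQ _
    (Fintype.linearCombination S fun j => Ideal.Quotient.mk (cycleIdeal u) (cycleTransport u j.val))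
    (by
      rw [Matrix.range_mulVecLin, Submodule.span_le]
      rintro _ ⟨j, rfl⟩
      rw [SetLike.mem_coe, LinearMap.mem_ker, ← mulVec_single_one, cycleMatrix_mulVec_single_one,
        map_add, Fintype.linearCombination_apply_single, Fintype.linearCombination_apply_single,
        one_smul]
      exact mk_cycleTransport_add_smul_mk_cycleTransport u j)

noncomputable def quotToCycleCokernel :
    S ⧸ cycleIdeal u →ₗ[S]
      (ZMod m → S) ⧸ LinearMap.range (cycleMatrix fun j => (u j : S)).mulVecLin :=
  Submodule.liftQSpanSingleton _
    ((LinearMap.range (cycleMatrix fun j => (u j : S)).mulVecLin).mkQ ∘ₗ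
      LinearMap.toSpanSingleton S _ (Pi.single 0 1))
    (by
      set q := (LinearMap.range (cycleMatrix fun j => (u j : S)).mulVecLin).mkQ
      have hmono := mkQ_single_natCast_eq_cycleTransport_smul u m
      rw [ZMod.natCast_self] at hmono
      rw [LinearMap.comp_apply, LinearMap.toSpanSingleton_apply, map_smul,
        ← inv_cycleTransport_card]
      calc (1 - (↑(cycleTransport u m)⁻¹ : S)) • q (Pi.single 0 1)
          = q (Pi.single 0 1) - (↑(cycleTransport u m)⁻¹ : S) • q (Pi.single 0 1) := by
            rw [sub_smul, one_smul]
        _ = q (Pi.single 0 1) - (↑(cycleTransport u m)⁻¹ : S) •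
              ((cycleTransport u m : S) • q (Pi.single 0 1)) := by rw [← hmono]
        _ = 0 := by rw [smul_smul, Units.inv_mul, one_smul, sub_self])

theorem quotToCycleCokernel_mk (r : S) :
    quotToCycleCokernel u (Ideal.Quotient.mk _ r) =
      r • (LinearMap.range (cycleMatrix fun j => (u j : S)).mulVecLin).mkQ (Pi.single 0 1) :=
  rfl

noncomputable def cycleCokernelEquiv :
    ((ZMod m → S) ⧸ LinearMap.range (cycleMatrix fun j => (u j : S)).mulVecLin) ≃ₗ[S]
      S ⧸ cycleIdeal u :=
  LinearEquiv.ofLinearMap (cycleCokernelToQuot u) (quotToCycleCokernel u)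
    (by
      refine Submodule.linearMap_qext _ (LinearMap.ext_ring ?_)
      change cycleCokernelToQuot u (quotToCycleCokernel u (Ideal.Quotient.mk _ 1)) =
        Ideal.Quotient.mk _ 1
      rw [quotToCycleCokernel_mk, one_smul]
      simp [cycleCokernelToQuot, Fintype.linearCombination_apply_single])
    (by
      apply Submodule.linearMap_qext
      refine LinearMap.pi_ext' fun j => LinearMap.ext_ring ?_
      simpa [quotToCycleCokernel_mk, cycleCokernelToQuot, Fintype.linearCombination_apply_single]
        using (mkQ_single_natCast_eq_cycleTransport_smul u j.val).symm)

end CycleCokernel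

/-- Let `R` be a commutative ring and `G` a (commutative)
group.  Consider a permutation `A` of a finite set `F`, given in cycle normal
form: `F = Σ i : Fin n, ZMod (k i)` with `A ⟨i, j⟩ = ⟨i, j + 1⟩`, and a labeling
`a : F → G`.  Let `M` be the `R[G]`-module presented by `R[G]^F` modulo the
relations `f + a(f)·A(f) = 0`, i.e. the cokernel of the matrix `L = I + P`
where `P (A f) f = a f`.  Let `gᵢ ∈ G` be the product of the labels around the
`i`-th cycle.  Then `M ≅ ⊕ᵢ R[G]/(1 + (-1)^{kᵢ+1} gᵢ)` and, consequently,
`det L = ∏ᵢ (1 + (-1)^{kᵢ+1} gᵢ)` up to a unit of `R[G]`. -/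
theorem veering_AB_module_decomposition
    (R : Type) [CommRing R] (G : Type) [CommGroup G]
    (n : ℕ) (k : Fin n → ℕ) [∀ i, NeZero (k i)]
    (a : (Σ i : Fin n, ZMod (k i)) → G) :
    let S := MonoidAlgebra R G
    let F := Σ i : Fin n, ZMod (k i)
    let A : F → F := fun x => ⟨x.1, x.2 + 1⟩
    let L : Matrix F F S :=
      1 + Matrix.of (fun f' f => if f' = A f then MonoidAlgebra.of R G (a f) else 0)
    let g : Fin n → G := fun i => ∏ j : ZMod (k i), a ⟨i, j⟩
    Nonempty (((F → S) ⧸ LinearMap.range L.mulVecLin) ≃ₗ[S]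
        (⨁ i : Fin n, S ⧸ Ideal.span
          {(1 : S) + ((-1 : ℤ) ^ (k i + 1)) • MonoidAlgebra.of R G (g i)})) ∧
    ∃ u : Sˣ, L.det =
      (u : S) * ∏ i, ((1 : S) + ((-1 : ℤ) ^ (k i + 1)) • MonoidAlgebra.of R G (g i)) := by
  intro S F A L g
  let u : ∀ i, ZMod (k i) → Sˣ := fun i j =>
    Units.map (MonoidAlgebra.of R G) (toUnits (a ⟨i, j⟩))
  have hu : ∀ i j, (u i j : S) = MonoidAlgebra.of R G (a ⟨i, j⟩) := fun _ _ => rfl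
  have hL : L = blockDiagonal' fun i => cycleMatrix fun j => (u i j : S) := by
    refine Matrix.ext fun ⟨i', j'⟩ ⟨i, j⟩ => ?_
    by_cases h : i' = i
    · subst h
      simp only [L, A, hu, cycleMatrix, blockDiagonal'_apply_eq, Matrix.add_apply, one_apply,
        of_apply, Sigma.mk.inj_iff (β := fun i => ZMod (k i)), heq_eq_eq, true_and]
    · simp [L, A, blockDiagonal'_apply_ne _ _ _ h, one_apply,
        Sigma.mk.inj_iff (β := fun i => ZMod (k i)), h]
  have hgen : ∀ i, (1 : S) - (-1) ^ k i * ∏ j, (u i j : S) =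
      1 + (-1 : ℤ) ^ (k i + 1) • MonoidAlgebra.of R G (g i) := by
    intro i
    simp only [hu, g, map_prod, zsmul_eq_mul]
    push_cast
    ring
  refine ⟨⟨?_⟩, 1, ?_⟩
  · rw [hL]
    exact blockDiagonal'CokernelEquiv _ ≪≫ₗ
      LinearEquiv.piCongrRight (fun i => cycleCokernelEquiv (u i) ≪≫ₗ
        Submodule.quotEquivOfEq _ _ (by rw [cycleIdeal, hgen])) ≪≫ₗ
      (DirectSum.linearEquivFunOnFintype S (Fin n) _).symm
  · rw [hL, det_blockDiagonal', Units.val_one, one_mul]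
    simp only [det_cycleMatrix, hgen]
end

section
/- Let R be a commutative ring and let L^AB : R^F → R^F, L^△ : R^F → R^E, L : R^E → R^E, and ε : R^F → R^E be R-module homomorphisms (F, E finite index sets) satisfying L^△ ∘ L^AB = L ∘ ε with ε surjective. Then the cokernel of the block map ℒ : R^F ⊕ R^F → R^F ⊕ R^E given by the matrix [[L^AB, I], [0, L^△]] is isomorphic as an R-module to the cokernel of L. -/
/-- Let `R` be a commutative ring and suppose
`L^△ ∘ L^AB = L ∘ ε` with `ε` surjective.  Then the cokernel of the block map
`ℒ(x, y) = (L^AB x + y, L^△ y)` on `R^F ⊕ R^F → R^F ⊕ R^E` is isomorphic to the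
cokernel of `L`. -/
theorem veering_block_presentation_cokernel
    (R : Type) [CommRing R] (F E : Type) [Fintype F] [Fintype E]
    (LAB : (F → R) →ₗ[R] (F → R)) (LT : (F → R) →ₗ[R] (E → R))
    (L : (E → R) →ₗ[R] (E → R)) (ε : (F → R) →ₗ[R] (E → R))
    (hcomm : LT ∘ₗ LAB = L ∘ₗ ε) (hsurj : Function.Surjective ε)
    (ℒ : ((F → R) × (F → R)) →ₗ[R] ((F → R) × (E → R)))
    (hℒ : ∀ x y, ℒ (x, y) = (LAB x + y, LT y)) :
    Nonempty ((((F → R) × (E → R)) ⧸ LinearMap.range ℒ) ≃ₗ[R]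
      ((E → R) ⧸ LinearMap.range L)) := by
  have hcomm' : ∀ x, LT (LAB x) = L (ε x) := fun x =>
    congrFun (congrArg DFunLike.coe hcomm) x
  set f : (E → R) →ₗ[R] (((F → R) × (E → R)) ⧸ LinearMap.range ℒ) :=
    (LinearMap.range ℒ).mkQ ∘ₗ LinearMap.inr R (F → R) (E → R) with hf
  have hker : LinearMap.ker f = LinearMap.range L := by
    ext c
    constructor
    · intro hc
      have : ((0 : F → R), c) ∈ LinearMap.range ℒ := by
        have := hc
        simp only [hf, LinearMap.mem_ker, LinearMap.comp_apply,
          LinearMap.inr_apply, Submodule.mkQ_apply,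
          Submodule.Quotient.mk_eq_zero] at this
        exact this
      obtain ⟨⟨x, y⟩, hxy⟩ := this
      rw [hℒ] at hxy
      have h1 : LAB x + y = 0 := congrArg Prod.fst hxy
      have h2 : LT y = c := congrArg Prod.snd hxy
      have hy : y = -LAB x := by linear_combination h1
      refine ⟨-ε x, ?_⟩
      rw [map_neg, ← hcomm', ← map_neg, ← hy, h2]
    · rintro ⟨d, rfl⟩
      obtain ⟨x, rfl⟩ := hsurj d
      simp only [hf, LinearMap.mem_ker, LinearMap.comp_apply,
        LinearMap.inr_apply, Submodule.mkQ_apply, Submodule.Quotient.mk_eq_zero]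
      refine ⟨(-x, LAB x), ?_⟩
      rw [hℒ]
      ext <;> simp [hcomm']
  have hfsurj : Function.Surjective f := by
    intro q
    obtain ⟨⟨a, b⟩, rfl⟩ := (LinearMap.range ℒ).mkQ_surjective q
    refine ⟨b - LT a, ?_⟩
    simp only [hf, LinearMap.comp_apply, LinearMap.inr_apply, Submodule.mkQ_apply]
    rw [Submodule.Quotient.eq]
    refine ⟨(0, -a), ?_⟩
    rw [hℒ]
    ext <;> simp
  exact ⟨(f.quotKerEquivOfSurjective hfsurj).symm.trans
    (Submodule.quotEquivOfEq _ _ hker)⟩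
end

section
/- Let D be a finite directed graph, G a finitely generated free abelian group, and α : H₁(D) → G a group homomorphism, inducing a ring homomorphism α : ℤ[H₁(D)] → ℤ[G]. Fix a spanning tree T of (the underlying undirected graph of) D, label each edge of T by 1 ∈ G, and label each directed edge e ∉ T by α of the class of the unique cycle in T ∪ {e} traversing e positively. Let A^G be the resulting G-labeled adjacency matrix over ℤ[G]. Then det(I − A^G) = α(P_D), where P_D = det(I − A) is the Perron polynomial of D. -/
/-!
Relabelling the edges of `D` through `β : C₁(D) → G`, `e ↦ ℓ e`, turns `A` into `A^G`, and
determinants commute with ring homomorphisms; so the content is that `β` agrees with `α` on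
`H₁(D)`. Both are homomorphisms agreeing on fundamental cycles, and these generate `H₁(D)`: a
cycle minus the combination of fundamental cycles with its off-tree coefficients is supported
on `T`, hence zero, because the boundaries of the `|V| - 1` edges of the connected set `T` span
the `(|V| - 1)`-dimensional space of the `δ_v - δ_{v₀}`, so are linearly independent.
-/

/-- The simplicial boundary map of a finite directed graph, `∂e = t(e) - s(e)`,
on integral 1-chains. -/
def graphBoundary (V E : Type) [Fintype E] [DecidableEq V] (s t : E → V) :
    (E → ℤ) →+ (V → ℤ) where
  toFun z v := ∑ e, z e * ((if t e = v then 1 else 0) - (if s e = v then 1 else 0))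
  map_zero' := by ext v; simp
  map_add' x y := by ext v; simp [add_mul, Finset.sum_add_distrib]

section

variable {V E : Type} [DecidableEq V] {s t : E → V}

def labeledAdjacency {R : Type*} [Semiring R] [Fintype E] (s t : E → V) (w : E → R) :
    Matrix V V R :=
  Matrix.of fun a b => ∑ e : E, if s e = a ∧ t e = b then w e else 0

theorem det_one_sub_labeledAdjacency_comp [Fintype V] [Fintype E]
    {R S : Type*} [CommRing R] [CommRing S] (f : R →+* S) (w : E → R) :
    (1 - labeledAdjacency s t (f ∘ w)).det = f (1 - labeledAdjacency s t w).det := by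
  have hmap : f.mapMatrix (labeledAdjacency s t w) = labeledAdjacency s t (f ∘ w) := by
    ext a b
    simp [labeledAdjacency, map_sum, apply_ite f]
  rw [RingHom.map_det, map_sub, map_one, hmap]

def edgeBoundary (K : Type*) [Ring K] (s t : E → V) (e : E) : V → K :=
  Pi.single (t e) 1 - Pi.single (s e) 1

theorem graphBoundary_eq_sum [Fintype E] (z : E → ℤ) :
    graphBoundary V E s t z = ∑ e, z e • edgeBoundary ℤ s t e := by
  ext v
  simp [graphBoundary, edgeBoundary, Finset.sum_apply, Pi.single_apply, eq_comm]

def ConnectsAll (s t : E → V) (T : Finset E) : Prop :=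
  ∀ u v : V, ∃ (n : ℕ) (q : Fin (n + 1) → V), q 0 = u ∧
    q (Fin.last n) = v ∧ ∀ i : Fin n, ∃ e ∈ T,
      (s e = q i.castSucc ∧ t e = q i.succ) ∨
      (t e = q i.castSucc ∧ s e = q i.succ)

section SpanningTree

variable {T : Finset E}

theorem single_sub_single_mem_span_edgeBoundary {K : Type*} [Ring K] {n : ℕ}
    (q : Fin (n + 1) → V)
    (hq : ∀ i : Fin n, ∃ e ∈ T, (s e = q i.castSucc ∧ t e = q i.succ) ∨
      (t e = q i.castSucc ∧ s e = q i.succ)) :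
    (Pi.single (q (Fin.last n)) 1 - Pi.single (q 0) 1 : V → K) ∈
      Submodule.span K (Set.range fun e : T => edgeBoundary K s t e) := by
  induction n with
  | zero => simp
  | succ n ih =>
    have hinit := ih (q ∘ Fin.castSucc) fun i => by simpa using hq i.castSucc
    obtain ⟨e, he, hstep⟩ := hq (Fin.last n)
    have hedge : edgeBoundary K s t e ∈
        Submodule.span K (Set.range fun e : T => edgeBoundary K s t e) :=
      Submodule.subset_span ⟨⟨e, he⟩, rfl⟩
    have hlast : (Pi.single (q (Fin.last (n + 1))) 1 - Pi.single (q (Fin.last n).castSucc) 1 :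
        V → K) ∈ Submodule.span K (Set.range fun e : T => edgeBoundary K s t e) := by
      rcases hstep with ⟨hs, ht⟩ | ⟨ht, hs⟩
      · simpa [edgeBoundary, hs, ht] using hedge
      · simpa [edgeBoundary, hs, ht] using Submodule.neg_mem _ hedge
    simpa using Submodule.add_mem _ hlast hinit

variable [Fintype V]

theorem linearIndependent_edgeBoundary {K : Type*} [Field K]
    (hcard : T.card + 1 = Fintype.card V) (hconn : ConnectsAll s t T) :
    LinearIndependent K fun e : T => edgeBoundary K s t e := by
  set S := Submodule.span K (Set.range fun e : T => edgeBoundary K s t e)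
  obtain ⟨v₀⟩ : Nonempty V := Fintype.card_pos_iff.mp (by omega)
  have hsingle (v : V) : (Pi.single v 1 : V → K) - Pi.single v₀ 1 ∈ S := by
    obtain ⟨n, q, rfl, rfl, hq⟩ := hconn v₀ v
    exact single_sub_single_mem_span_edgeBoundary q hq
  have htop : S ⊔ K ∙ (Pi.single v₀ 1 : V → K) = ⊤ := by
    rw [eq_top_iff, ← (Pi.basisFun K V).span_eq, Submodule.span_le]
    rintro _ ⟨v, rfl⟩
    simpa using Submodule.add_mem _ (Submodule.mem_sup_left (hsingle v))
      (Submodule.mem_sup_right (Submodule.mem_span_singleton_self (Pi.single v₀ 1 : V → K)))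
  have hlower : T.card ≤ Module.finrank K S := by
    have hsup := Submodule.finrank_add_le_finrank_add_finrank S (K ∙ (Pi.single v₀ 1 : V → K))
    rw [htop, finrank_top, Module.finrank_fintype_fun_eq_card] at hsup
    have hline := finrank_span_singleton (K := K) (Pi.single_ne_zero_iff.mpr one_ne_zero :
      (Pi.single v₀ 1 : V → K) ≠ 0)
    omega
  rw [linearIndependent_iff_card_eq_finrank_span, Fintype.card_coe]
  exact le_antisymm hlower <| by
    simpa using finrank_range_le_card (R := K) fun e : T => edgeBoundary K s t e

theorem linearIndependent_int_edgeBoundary (hcard : T.card + 1 = Fintype.card V)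
    (hconn : ConnectsAll s t T) :
    LinearIndependent ℤ fun e : T => edgeBoundary ℤ s t e := by
  have hcast : (fun e : T => algebraMap ℤ ℚ ∘ edgeBoundary ℤ s t e) =
      fun e : T => edgeBoundary ℚ s t e := by
    ext e v
    simp [edgeBoundary, Pi.single_apply]
  rw [← linearIndependent_algebraMap_comp_iff (S := ℚ), hcast]
  exact linearIndependent_edgeBoundary hcard hconn

variable [Fintype E]

theorem eq_zero_of_graphBoundary_eq_zero_of_support_subset
    (hcard : T.card + 1 = Fintype.card V) (hconn : ConnectsAll s t T) {z : E → ℤ}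
    (hz : graphBoundary V E s t z = 0) (hsupp : ∀ e ∉ T, z e = 0) : z = 0 := by
  have hsum : ∑ e : T, z e • edgeBoundary ℤ s t e = 0 := by
    rw [← hz, graphBoundary_eq_sum, Finset.sum_coe_sort T (fun e => z e • edgeBoundary ℤ s t e),
      Finset.sum_subset (Finset.subset_univ T) fun e _ he => by simp [hsupp e he]]
  ext e
  by_cases he : e ∈ T
  · exact Fintype.linearIndependent_iff.mp (linearIndependent_int_edgeBoundary hcard hconn) _
      hsum ⟨e, he⟩
  · exact hsupp e he

theorem cycle_ext_of_eqOn_compl (hcard : T.card + 1 = Fintype.card V)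
    (hconn : ConnectsAll s t T) {z w : AddMonoidHom.ker (graphBoundary V E s t)}
    (h : ∀ e ∉ T, (z : E → ℤ) e = (w : E → ℤ) e) : z = w := by
  rw [← sub_eq_zero]
  exact Subtype.ext <| eq_zero_of_graphBoundary_eq_zero_of_support_subset hcard hconn
    (z - w).2 fun e he => sub_eq_zero.mpr (h e he)

theorem eq_sum_fundamentalCycles [DecidableEq E] (hcard : T.card + 1 = Fintype.card V)
    (hconn : ConnectsAll s t T) {c : E → AddMonoidHom.ker (graphBoundary V E s t)}
    (hc : ∀ e ∉ T, (c e : E → ℤ) e = 1) (hc' : ∀ e ∉ T, ∀ e' ∉ T, e' ≠ e → (c e : E → ℤ) e' = 0)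
    (z : AddMonoidHom.ker (graphBoundary V E s t)) :
    z = ∑ e ∈ Tᶜ, (z : E → ℤ) e • c e := by
  refine cycle_ext_of_eqOn_compl hcard hconn fun e' he' => ?_
  have hterm (e : E) (he : e ∈ Tᶜ) :
      (z : E → ℤ) e * (c e : E → ℤ) e' = if e' = e then (z : E → ℤ) e else 0 := by
    split_ifs with h
    · rw [h, hc e (Finset.mem_compl.mp he), mul_one]
    · rw [hc' e (Finset.mem_compl.mp he) e' he' h, mul_zero]
  simp only [AddSubgroup.val_finsetSum, AddSubgroup.coe_zsmul, Finset.sum_apply, Pi.smul_apply,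
    smul_eq_mul, Finset.sum_congr rfl hterm]
  simp [he']

theorem AddMonoidHom.ext_of_fundamentalCycles {M : Type*} [AddCommGroup M]
    (hcard : T.card + 1 = Fintype.card V) (hconn : ConnectsAll s t T)
    {φ ψ : AddMonoidHom.ker (graphBoundary V E s t) →+ M}
    (h : ∀ e ∉ T, ∃ c : AddMonoidHom.ker (graphBoundary V E s t), (c : E → ℤ) e = 1 ∧
      (∀ e' ∉ T, e' ≠ e → (c : E → ℤ) e' = 0) ∧ φ c = ψ c) :
    φ = ψ := by
  classical
  choose! c hc hc' hφψ using h
  ext z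
  rw [eq_sum_fundamentalCycles hcard hconn hc hc' z, map_sum, map_sum]
  exact Finset.sum_congr rfl fun e he => by
    rw [map_zsmul, map_zsmul, hφψ e (Finset.mem_compl.mp he)]

end SpanningTree

theorem prod_zpow_eq_of_eq_one_on {G : Type*} [CommGroup G] [Fintype E] {T : Finset E}
    {ℓ : E → G} (hℓ : ∀ e ∈ T, ℓ e = 1) {x : E → ℤ} {e : E} (hxe : x e = 1)
    (hx : ∀ e' ∉ T, e' ≠ e → x e' = 0) :
    ∏ e', ℓ e' ^ x e' = ℓ e := by
  rw [Finset.prod_eq_single e _ (by simp), hxe, zpow_one]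
  intro e' _ he'
  by_cases he'T : e' ∈ T
  · rw [hℓ e' he'T, one_zpow]
  · rw [hx e' he'T he', zpow_zero]

end

/-- Let `D` be a finite directed graph, `G` a finitely
generated free abelian group, and `α : H₁(D) → G` a homomorphism (here
`H₁(D) = ker ∂` inside the 1-chains).  Fix a spanning tree `T`, label every
edge of `T` by `1 ∈ G` and every edge `e ∉ T` by `α` of the fundamental cycle
of `e` (the unique cycle supported on `T ∪ {e}` traversing `e` once positively).
Let `A^G` be the resulting `G`-labeled adjacency matrix over `ℤ[G]`.  Then
`det(I - A^G) = α(P_D)`: concretely, `det(I - A^G)` is the image of the Perron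
polynomial `det(I - A)` under the ring homomorphism induced by the monoid
homomorphism `β : C₁(D) → G` determined by the edge labels, and `β` agrees
with `α` on `H₁(D)`. -/
theorem veering_perron_specialization_via_spanning_tree
    (V E : Type) [Fintype V] [Fintype E] [DecidableEq V] [DecidableEq E]
    (s t : E → V)
    (G : Type) [CommGroup G]
    (α : (AddMonoidHom.ker (graphBoundary V E s t)) →+ Additive G)
    (T : Finset E)
    -- `T` is a spanning tree: it has `|V| - 1` edges and connects the graph
    (hTcard : T.card + 1 = Fintype.card V)
    (hTconn : ∀ u v : V, ∃ (n : ℕ) (q : Fin (n + 1) → V), q 0 = u ∧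
      q (Fin.last n) = v ∧ ∀ i : Fin n, ∃ e ∈ T,
        (s e = q i.castSucc ∧ t e = q i.succ) ∨
        (t e = q i.castSucc ∧ s e = q i.succ))
    (ℓ : E → G)
    (hℓT : ∀ e ∈ T, ℓ e = 1)
    (hℓfc : ∀ e ∉ T, ∃ (z : E → ℤ) (hz : graphBoundary V E s t z = 0),
      z e = 1 ∧ (∀ e', e' ∉ T → e' ≠ e → z e' = 0) ∧
      ℓ e = Additive.toMul (α ⟨z, hz⟩)) :
    let C₁ := Multiplicative (E → ℤ)
    let β : C₁ →* G :=
      { toFun := fun x => ∏ e : E, ℓ e ^ (Multiplicative.toAdd x e)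
        map_one' := by simp
        map_mul' := by
          intro x y
          rw [← Finset.prod_mul_distrib]
          refine Finset.prod_congr rfl fun e _ => ?_
          have h : Multiplicative.toAdd (x * y) e
              = Multiplicative.toAdd x e + Multiplicative.toAdd y e := rfl
          rw [h, zpow_add] }
    let emb : E → MonoidAlgebra ℤ C₁ := fun e =>
      MonoidAlgebra.of ℤ C₁ (Multiplicative.ofAdd (Pi.single e (1 : ℤ)))
    let A : Matrix V V (MonoidAlgebra ℤ C₁) :=
      Matrix.of fun a b => ∑ e : E, if s e = a ∧ t e = b then emb e else 0
    let AG : Matrix V V (MonoidAlgebra ℤ G) :=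
      Matrix.of fun a b => ∑ e : E,
        if s e = a ∧ t e = b then MonoidAlgebra.of ℤ G (ℓ e) else 0
    ((1 - AG).det = MonoidAlgebra.mapDomainRingHom ℤ β (1 - A).det) ∧
    ∀ z : AddMonoidHom.ker (graphBoundary V E s t),
      β (Multiplicative.ofAdd (z : E → ℤ)) = Additive.toMul (α z) := by
  intro C₁ β emb A AG
  have hβ (x : E → ℤ) : β (Multiplicative.ofAdd x) = ∏ e, ℓ e ^ x e := rfl
  refine ⟨?_, fun z => ?_⟩
  · have hlabel : MonoidAlgebra.mapDomainRingHom ℤ β ∘ emb =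
        fun e => MonoidAlgebra.of ℤ G (ℓ e) := by
      funext e
      have hsingle : β (Multiplicative.ofAdd (Pi.single e 1)) = ℓ e :=
        prod_zpow_eq_of_eq_one_on (T := ∅) (by simp) (Pi.single_eq_same e 1)
          fun e' _ he' => Pi.single_eq_of_ne he' 1
      simp [emb, hsingle]
    have hdet := det_one_sub_labeledAdjacency_comp (s := s) (t := t)
      (MonoidAlgebra.mapDomainRingHom ℤ β) emb
    rwa [hlabel] at hdet
  · have key : β.toAdditiveRight.comp (AddMonoidHom.ker (graphBoundary V E s t)).subtype = α :=
      AddMonoidHom.ext_of_fundamentalCycles hTcard hTconn fun e he => by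
        obtain ⟨c, hc, hce, hc', hℓc⟩ := hℓfc e he
        refine ⟨⟨c, hc⟩, hce, hc', ?_⟩
        simp [hβ, prod_zpow_eq_of_eq_one_on hℓT hce hc', hℓc]
    exact congrArg Additive.toMul (DFunLike.congr_fun key z)
end
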